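/- arXiv:1403.3740 — 7 statements merged into one kernel-verified Lean document; each statement's English description precedes it below -/
import Mathlib

section
/- Fix integers G, K, d ≥ 1, an integer g with 0 ≤ g ≤ G, and integers M, N with N ≥ Kd. Fix integers m_{jk} with 1 ≤ m_{jk} ≤ M for j ∈ {1,…,G}, k ∈ {1,…,K}, and integers n_i with Kd ≤ n_i ≤ N for i ∈ {1,…,g}. Set A_{jk} = m_{jk} − (G−g)Kd if j ≤ g and A_{jk} = m_{jk} − (G−g−1)Kd if j > g, and assume A_{jk} ≥ d for all j,k. Let H_{jk,i} ∈ ℂ^{M×N} for all j, k, i. For i ≤ g let H^s_{jk,i} ∈ ℂ^{m_{jk}×n_i} be the top-left m_{jk}×n_i submatrix of H_{jk,i}; for i > g let H^s_{jk,i} ∈ ℂ^{m_{jk}×N} consist of the top m_{jk} rows of H_{jk,i}. Suppose we are given: semi-unitary T^{II}_i ∈ ℂ^{N×Kd} for each i with g < i ≤ G; semi-unitary R_{jk} ∈ ℂ^{m_{jk}×A_{jk}} satisfying R_{jk}ᴴ H^s_{jk,i} T^{II}_i = 0 for all i with g < i ≤ G and i ≠ j; and semi-unitary T̃_i ∈ ℂ^{n_i×Kd}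 (i ≤ g) and Ũ_{jk} ∈ ℂ^{A_{jk}×d} satisfying Ũ_{jk}ᴴ (R_{jk}ᴴ H^s_{jk,i}) T̃_i = 0 for all j, k and all i ≤ g with i ≠ j. Define T_i ∈ ℂ^{N×Kd} as T̃_i stacked on top of an (N−n_i)×Kd zero block for i ≤ g, and T_i = T^{II}_i for i > g; define U_{jk} ∈ ℂ^{M×d} as R_{jk} Ũ_{jk} stacked on top of an (M−m_{jk})×d zero block. Then U_{jk}ᴴ H_{jk,i} T_i = 0 for all j ∈ {1,…,G}, k ∈ {1,…,K} and all i ∈ {1,…,G} with i ≠ j. -/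
open Matrix

lemma padSum {M mm : ℕ} (h : mm ≤ M) (f : Fin mm → ℂ) :
    (∑ r : Fin M, if hr : (r : ℕ) < mm then f ⟨(r : ℕ), hr⟩ else 0) = ∑ r : Fin mm, f r := by
  classical
  have h1 : (∑ r : Fin mm, f r)
      = ∑ r : Fin mm, (if hr : (r : ℕ) < mm then f ⟨(r : ℕ), hr⟩ else 0) := by
    refine Finset.sum_congr rfl fun r _ => ?_
    rw [dif_pos r.isLt]
  rw [h1, Fin.sum_univ_eq_sum_range (fun i => if hr : i < mm then f ⟨i, hr⟩ else 0),
      Fin.sum_univ_eq_sum_range (fun i => if hr : i < mm then f ⟨i, hr⟩ else 0)]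
  exact (Finset.sum_subset (Finset.range_subset_range.2 h)
    (fun i _ hi => dif_neg (by simpa using hi))).symm

lemma padL {M N d mm : ℕ} (h : mm ≤ M) (B : Matrix (Fin mm) (Fin d) ℂ)
    (X : Matrix (Fin M) (Fin N) ℂ) :
    (Matrix.of fun (r : Fin M) (c : Fin d) =>
      if hr : (r : ℕ) < mm then B ⟨(r : ℕ), hr⟩ c else 0)ᴴ * X
      = Bᴴ * X.submatrix (Fin.castLE h) id := by
  ext c y
  simp only [Matrix.mul_apply, Matrix.conjTranspose_apply, Matrix.submatrix_apply,
    Matrix.of_apply, id]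
  rw [← padSum h (fun r : Fin mm => star (B r c) * X (Fin.castLE h r) y)]
  refine Finset.sum_congr rfl fun r _ => ?_
  by_cases hr : (r : ℕ) < mm
  · rw [dif_pos hr, dif_pos hr]; rfl
  · rw [dif_neg hr, dif_neg hr, star_zero, zero_mul]

lemma padR {d' N w nn : ℕ} (h : nn ≤ N) (B : Matrix (Fin nn) (Fin w) ℂ)
    (Y : Matrix (Fin d') (Fin N) ℂ) :
    Y * (Matrix.of fun (r : Fin N) (c : Fin w) =>
      if hr : (r : ℕ) < nn then B ⟨(r : ℕ), hr⟩ c else 0)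
      = Y.submatrix id (Fin.castLE h) * B := by
  ext x c
  simp only [Matrix.mul_apply, Matrix.submatrix_apply, Matrix.of_apply, id]
  rw [← padSum h (fun r : Fin nn => Y x (Fin.castLE h r) * B r c)]
  refine Finset.sum_congr rfl fun r _ => ?_
  by_cases hr : (r : ℕ) < nn
  · rw [dif_pos hr, dif_pos hr]; rfl
  · rw [dif_neg hr, dif_neg hr, mul_zero]

/-- Inter-cell interference-nulling part of Lemma 2(b): in a MIMO cellular
network with `G` base stations (base stations with index `< g` are type-I,
those with index `≥ g` are type-II and use fixed outer precoders `TII i`),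
`K` mobile stations per cell, and partial CSI feedback profile given by the
submatrix sizes `m j k`, `n i`, the transceivers lifted from any solution of
the reduced zero-forcing system satisfy all inter-cell interference alignment
constraints `(U j k)ᴴ * H j k i * T i = 0` for `i ≠ j`. -/
theorem lifted_transceivers_null_intercell_interference
    (G K d M N g : ℕ) (hG : 1 ≤ G) (hK : 1 ≤ K) (hd : 1 ≤ d) (hg : g ≤ G)
    (hN : K * d ≤ N)
    (m : Fin G → Fin K → ℕ) (hm1 : ∀ j k, 1 ≤ m j k) (hmM : ∀ j k, m j k ≤ M)
    (n : Fin G → ℕ) (hn : ∀ i : Fin G, (i : ℕ) < g → K * d ≤ n i ∧ n i ≤ N)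
    (A : Fin G → Fin K → ℕ)
    (hA1 : ∀ (j : Fin G) (k : Fin K), (j : ℕ) < g → A j k + (G - g) * (K * d) = m j k)
    (hA2 : ∀ (j : Fin G) (k : Fin K), g ≤ (j : ℕ) → A j k + (G - g - 1) * (K * d) = m j k)
    (hAd : ∀ j k, d ≤ A j k)
    (H : Fin G → Fin K → Fin G → Matrix (Fin M) (Fin N) ℂ)
    -- fixed semi-unitary outer precoders of the type-II base stations
    (TII : Fin G → Matrix (Fin N) (Fin (K * d)) ℂ)
    (hTII : ∀ i : Fin G, g ≤ (i : ℕ) → (TII i)ᴴ * TII i = 1)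
    -- semi-unitary matrices spanning the left null space of the type-II interference
    (R : (j : Fin G) → (k : Fin K) → Matrix (Fin (m j k)) (Fin (A j k)) ℂ)
    (hR : ∀ j k, (R j k)ᴴ * R j k = 1)
    (hRnull : ∀ (j : Fin G) (k : Fin K) (i : Fin G), g ≤ (i : ℕ) → i ≠ j →
      (R j k)ᴴ * ((H j k i).submatrix (Fin.castLE (hmM j k)) id * TII i) = 0)
    -- solution of the reduced zero-forcing system on the effective channels
    (Tt : (i : Fin G) → Matrix (Fin (n i)) (Fin (K * d)) ℂ)
    (hTt : ∀ i : Fin G, (i : ℕ) < g → (Tt i)ᴴ * Tt i = 1)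
    (Ut : (j : Fin G) → (k : Fin K) → Matrix (Fin (A j k)) (Fin d) ℂ)
    (hUt : ∀ j k, (Ut j k)ᴴ * Ut j k = 1)
    (hZF : ∀ (j : Fin G) (k : Fin K) (i : Fin G), ∀ hig : (i : ℕ) < g, i ≠ j →
      (Ut j k)ᴴ * ((R j k)ᴴ *
        (H j k i).submatrix (Fin.castLE (hmM j k)) (Fin.castLE (hn i hig).2)) *
        Tt i = 0)
    -- the lifted outer precoders and decorrelators
    (T : Fin G → Matrix (Fin N) (Fin (K * d)) ℂ)
    (hT1 : ∀ i : Fin G, (i : ℕ) < g → T i = Matrix.of fun (r : Fin N) (c : Fin (K * d)) =>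
      if hr : (r : ℕ) < n i then Tt i ⟨(r : ℕ), hr⟩ c else 0)
    (hT2 : ∀ i : Fin G, g ≤ (i : ℕ) → T i = TII i)
    (U : (j : Fin G) → Fin K → Matrix (Fin M) (Fin d) ℂ)
    (hU : ∀ j k, U j k = Matrix.of fun (r : Fin M) (c : Fin d) =>
      if hr : (r : ℕ) < m j k then (R j k * Ut j k) ⟨(r : ℕ), hr⟩ c else 0) :
    ∀ (j : Fin G) (k : Fin K) (i : Fin G), i ≠ j → (U j k)ᴴ * H j k i * T i = 0 := by
  intro j k i hij
  rcases lt_or_ge (i : ℕ) g with hig | hig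
  · rw [hU j k, hT1 i hig, padL (hmM j k), padR (hn i hig).2]
    have e1 : ((R j k * Ut j k)ᴴ * (H j k i).submatrix (Fin.castLE (hmM j k)) id).submatrix
        id (Fin.castLE (hn i hig).2)
        = (Ut j k)ᴴ * ((R j k)ᴴ *
          (H j k i).submatrix (Fin.castLE (hmM j k)) (Fin.castLE (hn i hig).2)) := by
      rw [Matrix.conjTranspose_mul, Matrix.mul_assoc]
      ext x y
      simp [Matrix.mul_apply, Matrix.submatrix_apply]
    rw [e1]
    exact hZF j k i hig hij
  · rw [hU j k, hT2 i hig, padL (hmM j k), Matrix.conjTranspose_mul,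
      Matrix.mul_assoc, Matrix.mul_assoc, hRnull j k i hig hij, Matrix.mul_zero]
end

section
/- Fix integers G, K, d ≥ 1, N ≥ 1, an integer g with 0 ≤ g ≤ G, and integers A_{jk} (j ∈ {1,…,G}, k ∈ {1,…,K}) and n_i (i ∈ {1,…,g}). Then the following two statements are equivalent. (I): (1) A_{jk} ≥ d for all j,k; (2) N ≥ Kd and n_i ≥ Kd for all i ∈ {1,…,g}; (3) for all subsets J_r ⊆ {1,…,G}×{1,…,K} and J_t ⊆ {1,…,g}: Σ_{(j,k)∈J_r} (A_{jk} − d) + Σ_{i∈J_t} K(n_i − Kd) ≥ Kd · Σ_{(j,k)∈J_r} |J_t \ {j}|. (II): N ≥ Kd and there exist real numbers f^r_{jk,i} ≥ 0 and f^t_{jk,i} ≥ 0, defined for all j ∈ {1,…,G}, k ∈ {1,…,K} and i ∈ {1,…,g} with i ≠ j, such that: f^r_{jk,i} + f^t_{jk,i} ≥ Kd for every such triple (j,k,i); Σ_{i∈{1,…,g}\{j}} f^r_{jk,i} ≤ A_{jk} − d for all j,k; and Σ_{(j,k): j≠i} f^t_{jk,i} ≤ K(n_i − Kd) for all i ∈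 {1,…,g}. -/
/-!
The subset conditions are the cut conditions of a bipartite transportation problem: every
interfering pair `((j, k), i)` with `i < g`, `i ≠ j` demands `K d` units, to be supplied by mobile
station `(j, k)`, of capacity `A j k - d`, or by base station `i`, of capacity `K (n i - K d)`.
Summing the flow constraints over the pairs between `Jr` and `Jt` shows that a flow forces the cut
conditions, and the cut conditions for singletons give the bounds on `A` and `n`. Conversely,
splitting every demand into `K d` units and every capacity into unit slots turns the cut conditions
into Hall's condition, and a matching of units to slots is an integral flow.
-/

open Finset

section BipartiteFlow

variable {α β : Type*} (E : α → β → Prop)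

/- `⟨a, m⟩ ∈ unitSlots c J` is the `m`-th unit of capacity at `a ∈ J`, and `(e, u)` is the `u`-th
of the `D` units demanded by the edge `e`. -/
def unitSlots (c : α → ℕ) (J : Finset α) : Finset (Σ _ : α, ℕ) := J.sigma fun a => range (c a)

lemma card_unitSlots (c : α → ℕ) (J : Finset α) : #(unitSlots c J) = ∑ a ∈ J, c a := by
  simp [unitSlots, card_sigma]

abbrev DemandUnit (D : ℕ) := {e : α × β // E e.1 e.2} × Fin D

def unitNeighbors {D : ℕ} (R : α → ℕ) (T : β → ℕ) (x : DemandUnit E D) :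
    Finset ((Σ _ : α, ℕ) ⊕ (Σ _ : β, ℕ)) :=
  (unitSlots R {x.1.1.1}).disjSum (unitSlots T {x.1.1.2})

variable [DecidableRel E] {E} {D : ℕ}

lemma card_le_card_biUnion_unitNeighbors [DecidableEq α] [DecidableEq β] {R : α → ℕ} {T : β → ℕ}
    (hcut : ∀ (Jr : Finset α) (Jt : Finset β),
      D * ∑ a ∈ Jr, #(Jt.filter (E a)) ≤ ∑ a ∈ Jr, R a + ∑ b ∈ Jt, T b)
    (s : Finset (DemandUnit E D)) : #s ≤ #(s.biUnion (unitNeighbors E R T)) := by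
  set Jr := s.image (·.1.1.1)
  set Jt := s.image (·.1.1.2)
  have h_units : #s ≤ D * #(s.image Prod.fst) := by
    calc #s ≤ #(s.image Prod.fst ×ˢ s.image Prod.snd) := card_le_card subset_product
      _ ≤ #(s.image Prod.fst) * D := by
        rw [card_product]
        exact Nat.mul_le_mul_left _ ((card_le_univ _).trans_eq (Fintype.card_fin D))
      _ = _ := mul_comm _ _
  have h_edges : #(s.image Prod.fst) ≤ ∑ a ∈ Jr, #(Jt.filter (E a)) := by
    rw [← card_sigma]
    refine card_le_card_of_injOn (fun e => ⟨e.1.1, e.1.2⟩) (fun e he => ?_) (fun e _ e' _ h => ?_)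
    · obtain ⟨x, hx, rfl⟩ := mem_image.mp he
      simp only [coe_sigma, Set.mem_sigma_iff, mem_coe, mem_filter]
      exact ⟨mem_image_of_mem _ hx, mem_image_of_mem _ hx, x.1.2⟩
    · simp only [Sigma.mk.injEq, heq_eq_eq] at h
      exact Subtype.ext (Prod.ext h.1 h.2)
  have h_slots : (unitSlots R Jr).disjSum (unitSlots T Jt) ⊆ s.biUnion (unitNeighbors E R T) := by
    intro z hz
    simp only [mem_biUnion, unitNeighbors]
    rcases z with ⟨a, m⟩ | ⟨b, m⟩
    · simp only [inl_mem_disjSum, unitSlots, mem_sigma, mem_image, Jr] at hz ⊢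
      obtain ⟨⟨x, hx, rfl⟩, hm⟩ := hz
      exact ⟨x, hx, by simp, hm⟩
    · simp only [inr_mem_disjSum, unitSlots, mem_sigma, mem_image, Jt] at hz ⊢
      obtain ⟨⟨x, hx, rfl⟩, hm⟩ := hz
      exact ⟨x, hx, by simp, hm⟩
  calc #s ≤ D * ∑ a ∈ Jr, #(Jt.filter (E a)) := h_units.trans (Nat.mul_le_mul_left _ h_edges)
    _ ≤ ∑ a ∈ Jr, R a + ∑ b ∈ Jt, T b := hcut Jr Jt
    _ = #((unitSlots R Jr).disjSum (unitSlots T Jt)) := by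
      rw [card_disjSum, card_unitSlots, card_unitSlots]
    _ ≤ _ := card_le_card h_slots

variable [Fintype α] [Fintype β]

lemma card_demandUnit_fiber [DecidableEq α] [DecidableEq β] {a : α} {b : β} (h : E a b) :
    #{x : DemandUnit E D | x.1.1 = (a, b)} = D := by
  have : ({x : DemandUnit E D | x.1.1 = (a, b)} : Finset _) = {⟨(a, b), h⟩} ×ˢ univ := by
    ext ⟨e, u⟩
    simp [Subtype.ext_iff, eq_comm]
  simp [this]

lemma sum_card_demandUnit_row [DecidableEq α] [DecidableEq β] (a : α) (P : DemandUnit E D → Prop)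
    [DecidablePred P] :
    ∑ b ∈ univ.filter (E a), #{x : DemandUnit E D | x.1.1 = (a, b) ∧ P x} =
      #{x : DemandUnit E D | x.1.1.1 = a ∧ P x} := by
  rw [card_eq_sum_card_fiberwise (f := fun x => x.1.1.2) (t := univ.filter (E a))]
  · refine sum_congr rfl fun b _ => ?_
    rw [filter_filter]
    congr 1
    ext x
    simp only [mem_filter, mem_univ, true_and, Prod.ext_iff]
    tauto
  · intro x hx
    simp only [coe_filter, mem_univ, true_and, Set.mem_ofPred_eq] at hx ⊢
    exact hx.1 ▸ x.1.2

lemma sum_card_demandUnit_col [DecidableEq α] [DecidableEq β] (b : β) (P : DemandUnit E D → Prop)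
    [DecidablePred P] :
    ∑ a ∈ univ.filter (E · b), #{x : DemandUnit E D | x.1.1 = (a, b) ∧ P x} =
      #{x : DemandUnit E D | x.1.1.2 = b ∧ P x} := by
  rw [card_eq_sum_card_fiberwise (f := fun x => x.1.1.1) (t := univ.filter (E · b))]
  · refine sum_congr rfl fun a _ => ?_
    rw [filter_filter]
    congr 1
    ext x
    simp only [mem_filter, mem_univ, true_and, Prod.ext_iff]
    tauto
  · intro x hx
    simp only [coe_filter, mem_univ, true_and, Set.mem_ofPred_eq] at hx ⊢
    exact hx.1 ▸ x.1.2

section Matching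

variable {R : α → ℕ} {T : β → ℕ} {f : DemandUnit E D → (Σ _ : α, ℕ) ⊕ (Σ _ : β, ℕ)}

lemma card_demandUnit_isLeft_le [DecidableEq α] (hf : f.Injective)
    (hft : ∀ x, f x ∈ unitNeighbors E R T x) (a : α) :
    #{x : DemandUnit E D | x.1.1.1 = a ∧ (f x).isLeft} ≤ R a := by
  calc _ ≤ #((unitSlots R {a}).map .inl) := by
        refine card_le_card_of_injOn f (fun x hx => ?_) hf.injOn
        simp only [coe_filter, mem_univ, true_and, Set.mem_ofPred_eq, Sum.isLeft_iff] at hx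
        obtain ⟨rfl, y, hy⟩ := hx
        have := hft x
        rw [unitNeighbors, hy, inl_mem_disjSum] at this
        simpa [hy] using this
    _ = R a := by rw [card_map, card_unitSlots, sum_singleton]

lemma card_demandUnit_isRight_le [DecidableEq β] (hf : f.Injective)
    (hft : ∀ x, f x ∈ unitNeighbors E R T x) (b : β) :
    #{x : DemandUnit E D | x.1.1.2 = b ∧ (f x).isRight} ≤ T b := by
  calc _ ≤ #((unitSlots T {b}).map .inr) := by
        refine card_le_card_of_injOn f (fun x hx => ?_) hf.injOn
        simp only [coe_filter, mem_univ, true_and, Set.mem_ofPred_eq, Sum.isRight_iff] at hx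
        obtain ⟨rfl, y, hy⟩ := hx
        have := hft x
        rw [unitNeighbors, hy, inr_mem_disjSum] at this
        simpa [hy] using this
    _ = T b := by rw [card_map, card_unitSlots, sum_singleton]

end Matching

variable (E)

theorem exists_nat_flow_of_cut [DecidableEq α] [DecidableEq β] (D : ℕ) (R : α → ℕ) (T : β → ℕ)
    (hcut : ∀ (Jr : Finset α) (Jt : Finset β),
      D * ∑ a ∈ Jr, #(Jt.filter (E a)) ≤ ∑ a ∈ Jr, R a + ∑ b ∈ Jt, T b) :
    ∃ fr ft : α → β → ℕ, (∀ a b, E a b → fr a b + ft a b = D) ∧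
      (∀ a, ∑ b ∈ univ.filter (E a), fr a b ≤ R a) ∧
      (∀ b, ∑ a ∈ univ.filter (E · b), ft a b ≤ T b) := by
  obtain ⟨f, hf, hft⟩ := (all_card_le_biUnion_card_iff_exists_injective _).mp
    (card_le_card_biUnion_unitNeighbors hcut)
  refine ⟨fun a b => #{x | x.1.1 = (a, b) ∧ (f x).isLeft},
    fun a b => #{x | x.1.1 = (a, b) ∧ (f x).isRight}, fun a b h => ?_, fun a => ?_, fun b => ?_⟩
  · simp only [← Sum.not_isLeft, ← filter_filter]
    rw [card_filter_add_card_filter_not, card_demandUnit_fiber h]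
  · exact (sum_card_demandUnit_row a _).trans_le (card_demandUnit_isLeft_le hf hft a)
  · exact (sum_card_demandUnit_col b _).trans_le (card_demandUnit_isRight_le hf hft b)

theorem exists_nat_flow_of_int_cut [DecidableEq α] [DecidableEq β] (D : ℕ) (cR : α → ℤ)
    (cT : β → ℤ)
    (hcut : ∀ (Jr : Finset α) (Jt : Finset β),
      (D : ℤ) * ∑ a ∈ Jr, (#(Jt.filter (E a)) : ℤ) ≤ ∑ a ∈ Jr, cR a + ∑ b ∈ Jt, cT b) :
    ∃ fr ft : α → β → ℕ, (∀ a b, E a b → fr a b + ft a b = D) ∧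
      (∀ a, ∑ b ∈ univ.filter (E a), (fr a b : ℤ) ≤ cR a) ∧
      (∀ b, ∑ a ∈ univ.filter (E · b), (ft a b : ℤ) ≤ cT b) := by
  have hR : ∀ a, ((cR a).toNat : ℤ) = cR a := fun a =>
    Int.toNat_of_nonneg (by simpa using hcut {a} ∅)
  have hT : ∀ b, ((cT b).toNat : ℤ) = cT b := fun b =>
    Int.toNat_of_nonneg (by simpa using hcut ∅ {b})
  obtain ⟨fr, ft, hcover, hrow, hcol⟩ :=
    exists_nat_flow_of_cut E D (fun a => (cR a).toNat) (fun b => (cT b).toNat) fun Jr Jt => by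
      zify
      simpa only [hR, hT] using hcut Jr Jt
  refine ⟨fr, ft, hcover, fun a => ?_, fun b => ?_⟩
  · rw [← hR]; exact_mod_cast hrow a
  · rw [← hT]; exact_mod_cast hcol b

theorem cut_le_of_flow {𝕜 : Type*} [Semiring 𝕜] [PartialOrder 𝕜] [IsOrderedRing 𝕜] {D : 𝕜}
    {fr ft : α → β → 𝕜} {cR : α → 𝕜} {cT : β → 𝕜} {Jr : Finset α} {Jt : Finset β}
    (hnonneg : ∀ a b, E a b → 0 ≤ fr a b ∧ 0 ≤ ft a b)
    (hcover : ∀ a b, E a b → D ≤ fr a b + ft a b)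
    (hrow : ∀ a ∈ Jr, ∑ b ∈ univ.filter (E a), fr a b ≤ cR a)
    (hcol : ∀ b ∈ Jt, ∑ a ∈ univ.filter (E · b), ft a b ≤ cT b) :
    D * ∑ a ∈ Jr, (#(Jt.filter (E a)) : 𝕜) ≤ ∑ a ∈ Jr, cR a + ∑ b ∈ Jt, cT b := by
  have h_fr : ∑ a ∈ Jr, ∑ b ∈ Jt.filter (E a), fr a b ≤ ∑ a ∈ Jr, cR a := by
    refine sum_le_sum fun a ha => le_trans ?_ (hrow a ha)
    refine sum_le_sum_of_subset_of_nonneg (filter_subset_filter _ (subset_univ _)) ?_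
    exact fun b hb _ => (hnonneg a b (mem_filter.mp hb).2).1
  have h_ft : ∑ a ∈ Jr, ∑ b ∈ Jt.filter (E a), ft a b ≤ ∑ b ∈ Jt, cT b := by
    rw [sum_comm' (t' := Jt) (s' := fun b => Jr.filter (E · b)) (fun a b => by
      simp only [mem_filter]; tauto)]
    refine sum_le_sum fun b hb => le_trans ?_ (hcol b hb)
    refine sum_le_sum_of_subset_of_nonneg (filter_subset_filter _ (subset_univ _)) ?_
    exact fun a ha _ => (hnonneg a b (mem_filter.mp ha).2).2
  calc D * ∑ a ∈ Jr, (#(Jt.filter (E a)) : 𝕜) = ∑ a ∈ Jr, ∑ b ∈ Jt.filter (E a), D := by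
        simp only [mul_sum, sum_const, nsmul_eq_mul, Nat.cast_comm]
    _ ≤ ∑ a ∈ Jr, ∑ b ∈ Jt.filter (E a), (fr a b + ft a b) :=
        sum_le_sum fun a _ => sum_le_sum fun b hb => hcover a b (mem_filter.mp hb).2
    _ = ∑ a ∈ Jr, ∑ b ∈ Jt.filter (E a), fr a b + ∑ a ∈ Jr, ∑ b ∈ Jt.filter (E a), ft a b := by
        simp only [sum_add_distrib]
    _ ≤ _ := add_le_add h_fr h_ft

end BipartiteFlow

abbrev crossLink (g : ℕ) {G K : ℕ} (p : Fin G × Fin K) (i : Fin G) : Prop :=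
  (i : ℕ) < g ∧ i ≠ p.1

lemma filter_crossLink (g : ℕ) {G K : ℕ} (Jt : Finset (Fin G)) (p : Fin G × Fin K) :
    Jt.filter (crossLink g p) = (Jt.filter fun i : Fin G => (i : ℕ) < g).erase p.1 := by
  ext i
  simp only [mem_filter, mem_erase]
  tauto

lemma filter_crossLink_left {g G K : ℕ} {i : Fin G} (hi : (i : ℕ) < g) :
    univ.filter (crossLink g · i) = univ.filter fun p : Fin G × Fin K => p.1 ≠ i := by
  ext p
  simp [hi, eq_comm]

section Feasibility

variable {G K d g : ℕ} {A : Fin G → Fin K → ℤ} {n : Fin G → ℤ}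

lemma exists_flow_of_cut
    (hcut : ∀ (Jr : Finset (Fin G × Fin K)) (Jt : Finset (Fin G)), (∀ i ∈ Jt, (i : ℕ) < g) →
      (K * d : ℤ) * ∑ p ∈ Jr, ((Jt.erase p.1).card : ℤ) ≤
        ∑ p ∈ Jr, (A p.1 p.2 - d) + ∑ i ∈ Jt, (K : ℤ) * (n i - K * d)) :
    ∃ fr ft : Fin G → Fin K → Fin G → ℝ,
      (∀ (j : Fin G) (k : Fin K) (i : Fin G), (i : ℕ) < g → i ≠ j →
        0 ≤ fr j k i ∧ 0 ≤ ft j k i ∧ (K * d : ℝ) ≤ fr j k i + ft j k i) ∧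
      (∀ (j : Fin G) (k : Fin K),
        ∑ i ∈ univ.filter (fun i : Fin G => (i : ℕ) < g ∧ i ≠ j), fr j k i ≤ (A j k : ℝ) - d) ∧
      (∀ i : Fin G, (i : ℕ) < g →
        ∑ p ∈ univ.filter (fun p : Fin G × Fin K => p.1 ≠ i), ft p.1 p.2 i ≤
          (K : ℝ) * ((n i : ℝ) - K * d)) := by
  -- stations `i ≥ g` carry no link, so capacity `0` there lets `Jt` range over all stations
  set cT : Fin G → ℤ := fun i => if (i : ℕ) < g then K * (n i - K * d) else 0
  obtain ⟨fr, ft, hcover, hrow, hcol⟩ := exists_nat_flow_of_int_cut (crossLink g) (K * d)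
    (fun p => A p.1 p.2 - d) cT fun Jr Jt => by
      simpa only [filter_crossLink, sum_filter, Nat.cast_mul] using
        hcut Jr (Jt.filter fun i => (i : ℕ) < g) fun i hi => (mem_filter.mp hi).2
  refine ⟨fun j k i => fr (j, k) i, fun j k i => ft (j, k) i, fun j k i hi hij => ?_,
    fun j k => by dsimp only; exact_mod_cast hrow (j, k), fun i hi => ?_⟩
  · dsimp only
    exact ⟨by positivity, by positivity, by exact_mod_cast (hcover (j, k) i ⟨hi, hij⟩).ge⟩
  · have := hcol i
    rw [filter_crossLink_left hi] at this
    simp only [cT, if_pos hi] at this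
    dsimp only
    exact_mod_cast this

lemma cut_of_flow {fr ft : Fin G → Fin K → Fin G → ℝ}
    (hflow : ∀ (j : Fin G) (k : Fin K) (i : Fin G), (i : ℕ) < g → i ≠ j →
      0 ≤ fr j k i ∧ 0 ≤ ft j k i ∧ (K * d : ℝ) ≤ fr j k i + ft j k i)
    (hrow : ∀ (j : Fin G) (k : Fin K),
      ∑ i ∈ univ.filter (fun i : Fin G => (i : ℕ) < g ∧ i ≠ j), fr j k i ≤ (A j k : ℝ) - d)
    (hcol : ∀ i : Fin G, (i : ℕ) < g →
      ∑ p ∈ univ.filter (fun p : Fin G × Fin K => p.1 ≠ i), ft p.1 p.2 i ≤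
        (K : ℝ) * ((n i : ℝ) - K * d))
    (Jr : Finset (Fin G × Fin K)) (Jt : Finset (Fin G)) (hJt : ∀ i ∈ Jt, (i : ℕ) < g) :
    (K * d : ℤ) * ∑ p ∈ Jr, ((Jt.erase p.1).card : ℤ) ≤
      ∑ p ∈ Jr, (A p.1 p.2 - d) + ∑ i ∈ Jt, (K : ℤ) * (n i - K * d) := by
  have := cut_le_of_flow (crossLink g) (Jr := Jr) (Jt := Jt)
    (fun p i h => (hflow p.1 p.2 i h.1 h.2).imp_right And.left)
    (fun p i h => (hflow p.1 p.2 i h.1 h.2).2.2) (fun p _ => hrow p.1 p.2)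
    (fun i hi => (filter_crossLink_left (hJt i hi)).symm ▸ hcol i (hJt i hi))
  simp only [filter_crossLink, filter_true_of_mem hJt] at this
  exact_mod_cast this

end Feasibility

theorem ia_feasibility_conditions_iff_flow_general
    (G K d N g : ℕ) (hK : 1 ≤ K)
    (A : Fin G → Fin K → ℤ) (n : Fin G → ℤ) :
    ((∀ j k, (d : ℤ) ≤ A j k) ∧
     (K * d ≤ N ∧ ∀ i : Fin G, (i : ℕ) < g → (K * d : ℤ) ≤ n i) ∧
     (∀ (Jr : Finset (Fin G × Fin K)) (Jt : Finset (Fin G)),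
        (∀ i ∈ Jt, (i : ℕ) < g) →
        (K * d : ℤ) * ∑ p ∈ Jr, ((Jt.erase p.1).card : ℤ) ≤
          ∑ p ∈ Jr, (A p.1 p.2 - d) +
          ∑ i ∈ Jt, (K : ℤ) * (n i - K * d)))
    ↔
    (K * d ≤ N ∧
     ∃ fr ft : Fin G → Fin K → Fin G → ℝ,
       (∀ (j : Fin G) (k : Fin K) (i : Fin G), (i : ℕ) < g → i ≠ j →
          0 ≤ fr j k i ∧ 0 ≤ ft j k i ∧ (K * d : ℝ) ≤ fr j k i + ft j k i) ∧
       (∀ (j : Fin G) (k : Fin K),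
          ∑ i ∈ Finset.univ.filter (fun i : Fin G => (i : ℕ) < g ∧ i ≠ j), fr j k i ≤
            (A j k : ℝ) - d) ∧
       (∀ i : Fin G, (i : ℕ) < g →
          ∑ p ∈ Finset.univ.filter (fun p : Fin G × Fin K => p.1 ≠ i), ft p.1 p.2 i ≤
            (K : ℝ) * ((n i : ℝ) - K * d))) := by
  constructor
  · rintro ⟨-, ⟨hN, -⟩, hcut⟩
    exact ⟨hN, exists_flow_of_cut hcut⟩
  · rintro ⟨hN, fr, ft, hflow, hrow, hcol⟩
    have hcut := cut_of_flow hflow hrow hcol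
    refine ⟨fun j k => by simpa using hcut {(j, k)} ∅, ⟨hN, fun i hi => ?_⟩, hcut⟩
    have : 0 ≤ (K : ℤ) * (n i - K * d) := by simpa using hcut ∅ {i} (by simpa using hi)
    have := (mul_nonneg_iff_of_pos_left (by exact_mod_cast hK)).mp this
    linarith

/-- Corollary 1 of the paper: the subset-counting necessary IA feasibility
conditions of Theorem 1 are equivalent to the existence of a feasible flow
`{fr, ft}` in an associated max-flow network. -/
theorem ia_feasibility_conditions_iff_flow
    (G K d N g : ℕ) (hG : 1 ≤ G) (hK : 1 ≤ K) (hd : 1 ≤ d) (hN : 1 ≤ N) (hg : g ≤ G)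
    (A : Fin G → Fin K → ℤ) (n : Fin G → ℤ) :
    ((∀ j k, (d : ℤ) ≤ A j k) ∧
     (K * d ≤ N ∧ ∀ i : Fin G, (i : ℕ) < g → (K * d : ℤ) ≤ n i) ∧
     (∀ (Jr : Finset (Fin G × Fin K)) (Jt : Finset (Fin G)),
        (∀ i ∈ Jt, (i : ℕ) < g) →
        (K * d : ℤ) * ∑ p ∈ Jr, ((Jt.erase p.1).card : ℤ) ≤
          ∑ p ∈ Jr, (A p.1 p.2 - d) +
          ∑ i ∈ Jt, (K : ℤ) * (n i - K * d)))
    ↔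
    (K * d ≤ N ∧
     ∃ fr ft : Fin G → Fin K → Fin G → ℝ,
       (∀ (j : Fin G) (k : Fin K) (i : Fin G), (i : ℕ) < g → i ≠ j →
          0 ≤ fr j k i ∧ 0 ≤ ft j k i ∧ (K * d : ℝ) ≤ fr j k i + ft j k i) ∧
       (∀ (j : Fin G) (k : Fin K),
          ∑ i ∈ Finset.univ.filter (fun i : Fin G => (i : ℕ) < g ∧ i ≠ j), fr j k i ≤
            (A j k : ℝ) - d) ∧
       (∀ i : Fin G, (i : ℕ) < g →
          ∑ p ∈ Finset.univ.filter (fun p : Fin G × Fin K => p.1 ≠ i), ft p.1 p.2 i ≤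
            (K : ℝ) * ((n i : ℝ) - K * d))) :=
  ia_feasibility_conditions_iff_flow_general G K d N g hK A n
end

section
/- Fix integers G ≥ 2, K, d ≥ 1, and M, N with N > Kd and M ≤ (G−1)Kd + d. Let N_1 = min(GKd, N) and g_1 = ⌊G((G−1)Kd − M + d)/(N_1 − Kd)⌋. Let L = ({m_{jk}}, g, {n_i}) be a feedback profile, i.e., an integer g with 0 ≤ g ≤ G, integers m_{jk} with m_{jk} ≤ M for j ∈ {1,…,G}, k ∈ {1,…,K}, and integers n_i with n_i ≤ N for i ∈ {1,…,g}. Set A_{jk} = m_{jk} − (G−g)Kd if j ≤ g and A_{jk} = m_{jk} − (G−g−1)Kd if j > g. Suppose L satisfies the Theorem-1 conditions: (1) A_{jk} ≥ d for all j,k; (2) N ≥ Kd and n_i ≥ Kd for all i ∈ {1,…,g}; (3) for all subsets J_r ⊆ {1,…,G}×{1,…,K} and J_t ⊆ {1,…,g}: Σ_{(j,k)∈J_r} (A_{jk} − d) + Σ_{i∈J_t} K(n_i − Kd) ≥ Kd · Σ_{(j,k)∈J_r} |J_t \ {j}|. Then g ≥ g_1. -/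
/-- Lemma 3 of the paper: any feedback profile
`L = ({m j k}, g, {n i : i < g})` satisfying the necessary IA feasibility
conditions of Theorem 1 can have no more than `G - g₁` type-II base stations,
i.e. `g ≥ g₁`, where `g₁ = ⌊G((G-1)Kd - M + d) / (N₁ - Kd)⌋` and
`N₁ = min (G*K*d) N` (natural-number division is the integer floor, and all
subtractions below are between naturals where the minuend dominates). -/
theorem feedback_profile_min_type_one
    (G K d M N : ℕ) (hG : 2 ≤ G) (hK : 1 ≤ K) (hd : 1 ≤ d)
    (hN : K * d < N) (hM : M ≤ (G - 1) * (K * d) + d)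
    (g : ℕ) (hg : g ≤ G)
    (m : Fin G → Fin K → ℕ) (hmM : ∀ j k, m j k ≤ M)
    (n : Fin G → ℕ) (hnN : ∀ i : Fin G, (i : ℕ) < g → n i ≤ N)
    (A : Fin G → Fin K → ℤ)
    (hA : ∀ (j : Fin G) (k : Fin K), A j k = (m j k : ℤ) -
      (if (j : ℕ) < g then (G : ℤ) - g else (G : ℤ) - g - 1) * (K * d))
    (h1 : ∀ j k, (d : ℤ) ≤ A j k)
    (h2 : ∀ i : Fin G, (i : ℕ) < g → K * d ≤ n i)
    (h3 : ∀ (Jr : Finset (Fin G × Fin K)) (Jt : Finset (Fin G)),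
      (∀ i ∈ Jt, (i : ℕ) < g) →
      (K * d : ℤ) * ∑ p ∈ Jr, ((Jt.erase p.1).card : ℤ) ≤
        ∑ p ∈ Jr, (A p.1 p.2 - d) +
        ∑ i ∈ Jt, (K : ℤ) * ((n i : ℤ) - K * d)) :
    G * ((G - 1) * (K * d) + d - M) / (min (G * (K * d)) N - K * d) ≤ g := by
  have hKd1 : 1 ≤ K * d := Nat.one_le_iff_ne_zero.mpr (by positivity)
  have hKdN1 : K * d < min (G * (K * d)) N := by
    refine lt_min ?_ hN
    calc K * d = 1 * (K * d) := (one_mul _).symm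
    _ < G * (K * d) := Nat.mul_lt_mul_of_lt_of_le (by omega) le_rfl hKd1
  have hG1 : (1 : ℕ) ≤ G := by omega
  have hGcast : ((G - 1 : ℕ) : ℤ) = (G : ℤ) - 1 := by
    push_cast [Nat.cast_sub hG1]; ring
  -- first handle g = 0
  rcases Nat.eq_zero_or_pos g with hg0 | hg1
  · subst hg0
    -- from h1 and hA : M ≥ (G-1)*K*d + d, so the numerator is 0
    have j0 : Fin G := ⟨0, by omega⟩
    have k0 : Fin K := ⟨0, by omega⟩
    have h1' := h1 j0 k0
    rw [hA j0 k0] at h1'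
    simp only [Nat.not_lt_zero, if_false, Nat.cast_zero, sub_zero] at h1'
    have hmm : (m j0 k0 : ℤ) ≤ (M : ℤ) := by exact_mod_cast hmM j0 k0
    have hnum : ((G - 1) * (K * d) + d : ℕ) ≤ M := by
      have : (((G - 1) * (K * d) + d : ℕ) : ℤ) ≤ (M : ℤ) := by
        push_cast [hGcast]
        nlinarith [h1', hmm]
      exact_mod_cast this
    have hz : (G - 1) * (K * d) + d - M = 0 := by omega
    simp [hz]
  -- now g ≥ 1; reduce to an integer inequality
  suffices key : (G : ℤ) * (((G : ℤ) - 1) * ((K : ℤ) * d) + d - M)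
      ≤ (g : ℤ) * (((min (G * (K * d)) N : ℕ) : ℤ) - (K : ℤ) * d) by
    have hsub : (K * d : ℕ) ≤ min (G * (K * d)) N := le_of_lt hKdN1
    have hnat : G * ((G - 1) * (K * d) + d - M) ≤ g * (min (G * (K * d)) N - K * d) := by
      have : (↑(G * ((G - 1) * (K * d) + d - M)) : ℤ)
          ≤ (↑(g * (min (G * (K * d)) N - K * d)) : ℤ) := by
        push_cast [Nat.cast_sub hM, Nat.cast_sub hsub, hGcast]
        push_cast at key
        linarith [key]
      exact_mod_cast this
    calc G * ((G - 1) * (K * d) + d - M) / (min (G * (K * d)) N - K * d)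
        ≤ g * (min (G * (K * d)) N - K * d) / (min (G * (K * d)) N - K * d) :=
          Nat.div_le_div_right hnat
      _ = g := Nat.mul_div_cancel g (by omega)
  -- a lower bound on M from feasibility at a type-I base station (uses g ≥ 1)
  obtain ⟨j0, hj0v⟩ : ∃ j0 : Fin G, (j0 : ℕ) = 0 := ⟨⟨0, by omega⟩, rfl⟩
  obtain ⟨k0, -⟩ : ∃ k0 : Fin K, (k0 : ℕ) = 0 := ⟨⟨0, by omega⟩, rfl⟩
  have hj0 : ((j0 : ℕ) < g) := by omega
  have hMlow : (d : ℤ) + ((G : ℤ) - g) * ((K : ℤ) * d) ≤ M := by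
    have h1' := h1 j0 k0
    rw [hA j0 k0, if_pos hj0] at h1'
    have hmm : (m j0 k0 : ℤ) ≤ (M : ℤ) := by exact_mod_cast hmM j0 k0
    push_cast at h1'
    linarith
  have hgG : (g : ℤ) ≤ (G : ℤ) := by exact_mod_cast hg
  have hg1' : (1 : ℤ) ≤ (g : ℤ) := by exact_mod_cast hg1
  have hc : (0 : ℤ) ≤ (K : ℤ) * d := by positivity
  rcases le_total N (G * (K * d)) with hcase | hcase
  · -- N₁ = N : use condition (3) with Jr = univ, Jt = {i | i < g}
    rw [min_eq_right hcase]
    set Jt : Finset (Fin G) := Finset.univ.filter (fun i : Fin G => (i : ℕ) < g) with hJt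
    have hJtmem : ∀ i ∈ Jt, (i : ℕ) < g := fun i hi => (Finset.mem_filter.mp hi).2
    have hcard : Jt.card = g := by
      have himg : Jt.image Fin.val = Finset.range g := by
        ext x
        simp only [Finset.mem_image, Finset.mem_range, hJt, Finset.mem_filter,
          Finset.mem_univ, true_and]
        constructor
        · rintro ⟨i, hi, rfl⟩; exact hi
        · intro hx; exact ⟨⟨x, lt_of_lt_of_le hx hg⟩, hx, rfl⟩
      calc Jt.card = (Jt.image Fin.val).card :=
            (Finset.card_image_of_injective _ Fin.val_injective).symm
        _ = g := by rw [himg, Finset.card_range]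
    have key := h3 Finset.univ Jt hJtmem
    -- compute the left-hand sum
    have herase : ∀ j : Fin G, ((Jt.erase j).card : ℤ)
        = (g : ℤ) - if j ∈ Jt then 1 else 0 := by
      intro j
      by_cases hj : j ∈ Jt
      · rw [if_pos hj, Finset.cast_card_erase_of_mem hj, hcard]
      · rw [if_neg hj, Finset.erase_eq_of_notMem hj, hcard, sub_zero]
    have hboole : ∑ j : Fin G, (if j ∈ Jt then (1 : ℤ) else 0) = (g : ℤ) := by
      rw [Finset.sum_boole]
      norm_cast
      rw [Finset.filter_mem_eq_inter, Finset.univ_inter, hcard]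
    have hbool2 : ∑ j : Fin G, (if (j : ℕ) < g then (1 : ℤ) else 0) = (g : ℤ) := by
      rw [Finset.sum_boole]
      norm_cast
    have hL : ∑ p ∈ (Finset.univ : Finset (Fin G × Fin K)), ((Jt.erase p.1).card : ℤ)
        = (K : ℤ) * ((G : ℤ) * g - g) := by
      rw [← Finset.univ_product_univ, Finset.sum_product]
      simp only [Finset.sum_const, Finset.card_univ, Fintype.card_fin, nsmul_eq_mul]
      rw [← Finset.mul_sum]
      congr 1
      calc ∑ j : Fin G, ((Jt.erase j).card : ℤ)
          = ∑ j : Fin G, ((g : ℤ) - if j ∈ Jt then 1 else 0) :=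
            Finset.sum_congr rfl fun j _ => herase j
        _ = (G : ℤ) * g - g := by
            rw [Finset.sum_sub_distrib, hboole, Finset.sum_const, Finset.card_univ,
              Fintype.card_fin, nsmul_eq_mul]
    -- bound the first right-hand sum
    have hR1 : ∑ p ∈ (Finset.univ : Finset (Fin G × Fin K)), (A p.1 p.2 - d)
        ≤ (K : ℤ) * ((G : ℤ) * ((M : ℤ) - d - ((G : ℤ) - g - 1) * ((K : ℤ) * d))
            - (g : ℤ) * ((K : ℤ) * d)) := by
      have hstep : ∑ p ∈ (Finset.univ : Finset (Fin G × Fin K)), (A p.1 p.2 - d)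
          ≤ ∑ p ∈ (Finset.univ : Finset (Fin G × Fin K)),
              (((M : ℤ) - d - ((G : ℤ) - g - 1) * ((K : ℤ) * d))
                - (if (p.1 : ℕ) < g then (1 : ℤ) else 0) * ((K : ℤ) * d)) := by
        apply Finset.sum_le_sum
        intro p _
        rw [hA p.1 p.2]
        have hmm : (m p.1 p.2 : ℤ) ≤ (M : ℤ) := by exact_mod_cast hmM p.1 p.2
        by_cases hp : (p.1 : ℕ) < g
        · rw [if_pos hp, if_pos hp]; push_cast; linarith
        · rw [if_neg hp, if_neg hp]; push_cast; linarith
      refine hstep.trans_eq ?_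
      rw [← Finset.univ_product_univ, Finset.sum_product]
      have hin : ∀ x : Fin G, ∑ _y : Fin K,
          ((M : ℤ) - d - ((G : ℤ) - g - 1) * ((K : ℤ) * d)
            - (if (x : ℕ) < g then (1 : ℤ) else 0) * ((K : ℤ) * d))
          = (K : ℤ) * (((M : ℤ) - d - ((G : ℤ) - g - 1) * ((K : ℤ) * d))
            - (if (x : ℕ) < g then (1 : ℤ) else 0) * ((K : ℤ) * d)) := fun x => by
        rw [Finset.sum_const, Finset.card_univ, Fintype.card_fin, nsmul_eq_mul]
      rw [Finset.sum_congr rfl fun x _ => hin x, ← Finset.mul_sum]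
      congr 1
      rw [Finset.sum_sub_distrib, Finset.sum_const, Finset.card_univ, Fintype.card_fin,
        nsmul_eq_mul, ← Finset.sum_mul, hbool2]
    -- bound the second right-hand sum
    have hR2 : ∑ i ∈ Jt, (K : ℤ) * ((n i : ℤ) - K * d)
        ≤ (g : ℤ) * ((K : ℤ) * ((N : ℤ) - (K : ℤ) * d)) := by
      have hptw : ∀ i ∈ Jt, (K : ℤ) * ((n i : ℤ) - K * d)
          ≤ (K : ℤ) * ((N : ℤ) - (K : ℤ) * d) := by
        intro i hi
        have hn : (n i : ℤ) ≤ (N : ℤ) := by exact_mod_cast hnN i (hJtmem i hi)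
        exact mul_le_mul_of_nonneg_left (by linarith) (by positivity)
      calc ∑ i ∈ Jt, (K : ℤ) * ((n i : ℤ) - K * d)
          ≤ ∑ _i ∈ Jt, (K : ℤ) * ((N : ℤ) - (K : ℤ) * d) := Finset.sum_le_sum hptw
        _ = (g : ℤ) * ((K : ℤ) * ((N : ℤ) - (K : ℤ) * d)) := by
            rw [Finset.sum_const, hcard, nsmul_eq_mul]
    rw [hL] at key
    have hKpos : (0 : ℤ) < (K : ℤ) := by exact_mod_cast hK
    have hfin : (K : ℤ) * ((G : ℤ) * (((G : ℤ) - 1) * ((K : ℤ) * d) + d - M))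
        ≤ (K : ℤ) * ((g : ℤ) * ((N : ℤ) - (K : ℤ) * d)) := by linarith [key, hR1, hR2]
    exact le_of_mul_le_mul_left hfin hKpos
  · -- N₁ = G*K*d : direct argument
    rw [min_eq_left hcase]
    push_cast
    nlinarith [mul_nonneg (sub_nonneg.mpr hgG) hc, hMlow,
      mul_le_mul_of_nonneg_left hMlow (by positivity : (0:ℤ) ≤ (G:ℤ))]
end

section
/- Fix integers G ≥ 2, K, d ≥ 1, and M, N with N > Kd and M ≤ (G−1)Kd + d. Let N_1 = min(GKd, N) and g_1 = ⌊G((G−1)Kd − M + d)/(N_1 − Kd)⌋. Let L = ({m_{jk}}, g, {n_i}) be a feedback profile: an integer g with 0 ≤ g ≤ G, integers m_{jk} ≤ M (j ∈ {1,…,G}, k ∈ {1,…,K}) and integers n_i ≤ N (i ∈ {1,…,g}). Set A_{jk} = m_{jk} − (G−g)Kd if j ≤ g and A_{jk} = m_{jk} − (G−g−1)Kd if j > g, and define the feedback dimension D(L) = Σ_{j=1}^{G} Σ_{k=1}^{K} Σ_{i=1}^{g} (n_i A_{jk} − 1) + Σ_{j=g+1}^{G} Σ_{k=1}^{K} (Kd·A_{jk}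 − 1). Suppose L satisfies the Theorem-1 conditions: (1) A_{jk} ≥ d for all j,k; (2) N ≥ Kd and n_i ≥ Kd for all i ∈ {1,…,g}; (3) for all subsets J_r ⊆ {1,…,G}×{1,…,K} and J_t ⊆ {1,…,g}: Σ_{(j,k)∈J_r} (A_{jk} − d) + Σ_{i∈J_t} K(n_i − Kd) ≥ Kd · Σ_{(j,k)∈J_r} |J_t \ {j}|. Then D(L) ≥ D_low, where D_low = K·G·N_1·g_1·(M − (G−g_1)Kd) − K·G². -/
set_option maxHeartbeats 1000000

lemma concave_min (Cc t α β u : ℤ) (hα : α ≤ u) (hβ : u ≤ β)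
    (hA : t ≤ α*(Cc-α)) (hB : t ≤ β*(Cc-β)) : t ≤ u*(Cc-u) := by
  rcases lt_or_eq_of_le (hα.trans hβ) with h | h
  · have key : (β-α) * t ≤ (β-α) * (u*(Cc-u)) := by
      nlinarith [mul_nonneg (sub_nonneg.2 hα) (sub_nonneg.2 hβ),
        mul_nonneg (sub_nonneg.2 hβ) (sub_nonneg.2 hA),
        mul_nonneg (sub_nonneg.2 hα) (sub_nonneg.2 hB),
        mul_nonneg (mul_nonneg (sub_nonneg.2 hα) (sub_nonneg.2 hβ)) (sub_nonneg.2 h.le)]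
    exact le_of_mul_le_mul_left key (by linarith)
  · have hu : u = α := le_antisymm (h ▸ hβ) hα
    rw [hu]; exact hA

lemma core (G K d N N1 M P x g S T : ℤ)
    (hG : 2 ≤ G) (hK : 1 ≤ K) (hd : 1 ≤ d)
    (hN1l : K*d < N1) (hN1u : N1 ≤ G*(K*d)) (hN1N : N1 ≤ N)
    (hN1eq : N1 = G*(K*d) ∨ N1 = N)
    (hP : P = (G-1)*(K*d)+d-M) (hP0 : 0 ≤ P)
    (hx0 : 0 ≤ x) (hxl : x*(N1-K*d) ≤ G*P)
    (hg0 : 0 ≤ g) (hgG : g ≤ G)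
    (hMI : 1 ≤ g → (G-g)*(K*d)+d ≤ M)
    (hMII : g ≤ G-1 → (G-g-1)*(K*d)+d ≤ M)
    (hS1 : g*(K*d) ≤ S) (hS2 : S ≤ g*N)
    (hT1 : G*(K*d) ≤ T)
    (hT2 : T ≤ g*K*(M-(G-g)*(K*d)) + (G-g)*K*(M-(G-g-1)*(K*d)))
    (hstar : G*(K*d)*(1+g*K) ≤ T + K*S) :
    G*K*N1*x*(M-(G-x)*(K*d)) - (G-1)*(G-g)*K - (G-g)*(K*d)^2 ≤ S*T := by
  set q : ℤ := K*d with hq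
  have hq1 : 1 ≤ q := by nlinarith
  have hK0 : (0:ℤ) < K := by linarith
  have hS0 : 0 ≤ S := le_trans (mul_nonneg hg0 (by linarith)) hS1
  have hT0 : 0 ≤ T := le_trans (mul_nonneg (by linarith) (by linarith)) hT1
  have hslack1 : (0:ℤ) ≤ (G-1)*(G-g)*K :=
    mul_nonneg (mul_nonneg (by linarith) (by linarith)) (by linarith)
  have hslack2 : (0:ℤ) ≤ (G-g)*q^2 := mul_nonneg (by linarith) (by positivity)
  -- trivial cases
  by_cases hx1 : x ≤ 0
  · have hx : x = 0 := le_antisymm hx1 hx0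
    rw [hx]; nlinarith [mul_nonneg hS0 hT0]
  push_neg at hx1
  replace hx1 : 1 ≤ x := hx1
  set W : ℤ := M-(G-x)*q with hW
  by_cases hW1 : W ≤ 0
  · have hB : G*K*N1*x*W ≤ 0 := by
      have h1 : (0:ℤ) ≤ G*K*N1*x :=
        mul_nonneg (mul_nonneg (mul_nonneg (by linarith) (by linarith)) (by linarith)) hx0
      exact mul_nonpos_of_nonneg_of_nonpos h1 hW1
    nlinarith [mul_nonneg hS0 hT0]
  push_neg at hW1
  replace hW1 : 1 ≤ W := hW1
  -- g ≥ 1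
  have hg1 : 1 ≤ g := by
    by_contra hgg
    push_neg at hgg
    have hg : g = 0 := le_antisymm (by omega) hg0
    have h := hMII (by omega)
    rw [hg] at h
    have hP0' : P ≤ 0 := by rw [hP]; linarith
    have h2 : x*(N1-q) ≤ 0 :=
      le_trans hxl (mul_nonpos_of_nonneg_of_nonpos (by linarith) hP0')
    nlinarith [mul_pos (by linarith : (0:ℤ) < x) (by linarith : (0:ℤ) < N1 - q)]
  have hPg : P ≤ (g-1)*q := by
    have h := hMI hg1
    rw [hP]; linarith
  -- key : gq + GP ≤ gN
  have hGP0 : 0 ≤ G*P := mul_nonneg (by linarith) hP0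
  have hkey : g*q + G*P ≤ g*N := by
    have e : G*q*(1+g*K) - (g*K*(M-(G-g)*q) + (G-g)*K*(M-(G-g-1)*q)) = K*(g*q+G*P) := by
      rw [hP]; ring
    have h1 : K*(g*q+G*P) ≤ K*S := by linarith
    have h2 : K*S ≤ K*(g*N) := mul_le_mul_of_nonneg_left hS2 (by linarith)
    exact le_of_mul_le_mul_left (le_trans h1 h2) hK0
  -- x ≤ g
  have hxg : x ≤ g := by
    have hGPg : G*P ≤ G*((g-1)*q) := mul_le_mul_of_nonneg_left hPg (by linarith)
    rcases hN1eq with h|h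
    · have h1 : x*((G-1)*q) ≤ G*((g-1)*q) := by
        have := hxl; rw [h] at this; nlinarith
      have h2 : x*((G-1)*q) ≤ g*((G-1)*q) := by
        nlinarith [mul_nonneg (sub_nonneg.2 hgG) (by linarith : (0:ℤ) ≤ q)]
      exact le_of_mul_le_mul_right h2 (mul_pos (by linarith) (by linarith))
    · have h1 : x*(N1-q) ≤ g*(N1-q) := by rw [h] at hxl ⊢; linarith
      exact le_of_mul_le_mul_right h1 (by linarith)
  -- setup for main cases
  have hCα : G*q*(1+g*K) - (g*K*(M-(G-g)*q) + (G-g)*K*(M-(G-g-1)*q)) = K*(g*q+G*P) := by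
    rw [hP]; ring
  have huα : K*(g*q+G*P) ≤ K*S := by linarith
  have hTCu : G*q*(1+g*K) - K*S ≤ T := by linarith
  have hu0 : 0 ≤ K*S := mul_nonneg (by linarith) hS0
  have hfin : (K*S)*(G*q*(1+g*K)-K*S) ≤ K*(S*T) := by
    have h1 : (K*S)*(G*q*(1+g*K)-K*S) ≤ (K*S)*T := mul_le_mul_of_nonneg_left hTCu hu0
    linarith only [h1]
  -- Eα : the α-endpoint value bound (E3)
  have hGW : G*W = G*(x-1)*q + G*d - G*P := by rw [hW, hP]; ring
  have hGW0 : (0:ℤ) < G*W := mul_pos (by linarith) (by linarith)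
  have hE3 : G*N1*x*W ≤ (g*q+G*P)*((G-1)*(g*q)+G*d-G*P) := by
    have a1 : x*N1 ≤ x*q + G*P := by
      have : x*(N1-q) = x*N1 - x*q := by ring
      linarith only [hxl, this]
    have a3 : (x*N1)*(G*W) ≤ (x*q+G*P)*(G*W) :=
      mul_le_mul_of_nonneg_right a1 hGW0.le
    have a4 : (x*q+G*P)*(G*W) = (x*q+G*P)*(G*(x-1)*q+G*d-G*P) := by rw [hGW]
    have t1 : (0:ℤ) ≤ q^2*(g*(G-g)) := mul_nonneg (by positivity) (mul_nonneg hg0 (by linarith))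
    have t2 : (0:ℤ) ≤ G*q^2*((g-x)*(g+x-1)) :=
      mul_nonneg (mul_nonneg (by linarith) (by positivity))
        (mul_nonneg (by linarith) (by linarith))
    have t3 : (0:ℤ) ≤ G*d*q*(g-x) :=
      mul_nonneg (mul_nonneg (mul_nonneg (by linarith) (by linarith)) (by linarith)) (by linarith)
    have t4 : (0:ℤ) ≤ (G*P)*q*(G-g) :=
      mul_nonneg (mul_nonneg hGP0 (by linarith)) (by linarith)
    have t5 : (0:ℤ) ≤ (G*P)*q*((G-1)*(g-x)) :=
      mul_nonneg (mul_nonneg hGP0 (by linarith))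
        (mul_nonneg (by linarith) (by linarith))
    linarith only [a3, a4, t1, t2, t3, t4, t5]
  have hEα : K*(G*K*N1*x*W - (G-1)*(G-g)*K - (G-g)*q^2) ≤
      (K*(g*q+G*P))*(G*q*(1+g*K)-K*(g*q+G*P)) := by
    have b1 : K^2*(G*N1*x*W) ≤ K^2*((g*q+G*P)*((G-1)*(g*q)+G*d-G*P)) :=
      mul_le_mul_of_nonneg_left hE3 (by positivity)
    have b2 : (K*(g*q+G*P))*(G*q*(1+g*K)-K*(g*q+G*P))
        = K^2*((g*q+G*P)*((G-1)*(g*q)+G*d-G*P)) := by rw [hq]; ring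
    have b3 : (0:ℤ) ≤ K*((G-1)*(G-g)*K) := mul_nonneg (by linarith) hslack1
    have b4 : (0:ℤ) ≤ K*((G-g)*q^2) := mul_nonneg (by linarith) hslack2
    linarith only [b1, b2, b3, b4]
  rcases hN1eq with hn1 | hn1
  · -- N1 = G*q
    have hxlG : x*(G*q-q) ≤ G*P := by rw [hn1] at hxl; exact hxl
    have c1 : G*W ≤ (x-G)*q + G*d := by
      have : x*(G*q-q) = x*G*q - x*q := by ring
      linarith [hGW, hxlG]
    have c2 : (0:ℤ) ≤ K*G*q*x :=
      mul_nonneg (mul_nonneg (mul_nonneg (by linarith) (by linarith)) (by linarith)) hx0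
    have c3 : (K*G*q*x)*(G*W) ≤ (K*G*q*x)*((x-G)*q+G*d) :=
      mul_le_mul_of_nonneg_left c1 c2
    have c4 : (K*G*q*x)*((x-G)*q+G*d) = K*G*q^2*(x*(x-G)) + G^2*q^2*x := by rw [hq]; ring
    have c5 : K*G*q^2*(x*(x-G)) ≤ 0 := by
      have h5 : (0:ℤ) ≤ K*G*q^2*(x*(G-x)) :=
        mul_nonneg (mul_nonneg (mul_nonneg (by linarith) (by linarith)) (by positivity))
          (mul_nonneg hx0 (by linarith))
      linarith only [h5]
    have c6 : G^2*q^2*x ≤ G^2*q^2*g :=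
      mul_le_mul_of_nonneg_left hxg (by positivity)
    by_cases hcase : K*S ≤ G*q*(1+g*K) - G*q
    · -- concavity with β = K*(G*g*q)
      have huβ : K*S ≤ K*(G*g*q) := by linarith only [hcase]
      have hEβ : K*(G*K*N1*x*W - (G-1)*(G-g)*K - (G-g)*q^2) ≤
          (K*(G*g*q))*(G*q*(1+g*K)-K*(G*g*q)) := by
        have d1 : (K*(G*g*q))*(G*q*(1+g*K)-K*(G*g*q)) = K*(G^2*q^2*g) := by ring
        have d2 : K*(G*K*N1*x*W) = K*((K*G*q*x)*(G*W)) := by rw [hn1]; ring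
        have d3 : K*((K*G*q*x)*(G*W)) ≤ K*(G^2*q^2*g) := by
          have h6 : (K*G*q*x)*(G*W) ≤ G^2*q^2*g := by linarith [c3, c4, c5, c6]
          exact mul_le_mul_of_nonneg_left h6 (by linarith)
        have d4 : (0:ℤ) ≤ K*((G-1)*(G-g)*K) := mul_nonneg (by linarith) hslack1
        have d5 : (0:ℤ) ≤ K*((G-g)*q^2) := mul_nonneg (by linarith) hslack2
        linarith only [d1, d2, d3, d4, d5]
      have hconc := concave_min (G*q*(1+g*K)) (K*(G*K*N1*x*W - (G-1)*(G-g)*K - (G-g)*q^2))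
        (K*(g*q+G*P)) (K*(G*g*q)) (K*S) huα huβ hEα hEβ
      have hfin2 := le_trans hconc hfin
      exact le_of_mul_le_mul_left hfin2 hK0
    · -- case A : S ≥ G*g*q
      push_neg at hcase
      have hSg : G*g*q ≤ S := by
        have h1 : K*(G*g*q) < K*S := by linarith only [hcase]
        exact le_of_lt (lt_of_mul_lt_mul_left h1 (by linarith))
      have d1 : (G*g*q)*(G*q) ≤ S*T :=
        mul_le_mul hSg hT1 (mul_nonneg (by linarith) (by linarith)) hS0
      have d2 : G*K*N1*x*W = (K*G*q*x)*(G*W) := by rw [hn1]; ring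
      linarith only [c3, c4, c5, c6, d1, d2, hslack1, hslack2]
  · -- N1 = N
    have hxlN : x*(N-q) ≤ G*P := by rw [hn1] at hxl; exact hxl
    have hNGq : N ≤ G*q := by rw [← hn1]; exact hN1u
    have hN0 : (0:ℤ) ≤ N := by linarith
    have huβ : K*S ≤ K*(g*N) := mul_le_mul_of_nonneg_left hS2 (by linarith)
    have hEβ : K*(G*K*N1*x*W - (G-1)*(G-g)*K - (G-g)*q^2) ≤
        (K*(g*N))*(G*q*(1+g*K)-K*(g*N)) := by
      have e1 : G*W ≤ G*(x-1)*q+G*d-x*(N-q) := by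
        have : x*(N-q) = x*N - x*q := by ring
        linarith [hGW, hxlN]
      have e2 : x*(G*W) ≤ x*(G*(x-1)*q+G*d-x*(N-q)) := mul_le_mul_of_nonneg_left e1 hx0
      have e3 : x*(G*(x-1)*q+G*d-x*(N-q)) ≤ g*(G*d+G*g*q-g*N) := by
        have u1 : (0:ℤ) ≤ G*d*(g-x) :=
          mul_nonneg (mul_nonneg (by linarith) (by linarith)) (by linarith)
        have u2 : (0:ℤ) ≤ q*(x*(G-x)) :=
          mul_nonneg (by linarith) (mul_nonneg hx0 (by linarith))
        have u3 : (0:ℤ) ≤ ((g-x)*(g+x))*(G*q-N) :=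
          mul_nonneg (mul_nonneg (by linarith) (by linarith)) (by linarith)
        linarith only [u1, u2, u3]
      have e4 : (x*(G*W))*N ≤ (g*(G*d+G*g*q-g*N))*N :=
        mul_le_mul_of_nonneg_right (le_trans e2 e3) hN0
      have e5 : (K*(g*N))*(G*q*(1+g*K)-K*(g*N)) = K^2*((g*(G*d+G*g*q-g*N))*N) := by
        rw [hq]; ring
      have e6 : K^2*((x*(G*W))*N) ≤ K^2*((g*(G*d+G*g*q-g*N))*N) :=
        mul_le_mul_of_nonneg_left e4 (by positivity)
      have e7 : K*(G*K*N1*x*W) = K^2*((x*(G*W))*N) := by rw [hn1]; ring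
      have e8 : (0:ℤ) ≤ K*((G-1)*(G-g)*K) := mul_nonneg (by linarith) hslack1
      have e9 : (0:ℤ) ≤ K*((G-g)*q^2) := mul_nonneg (by linarith) hslack2
      linarith only [e5, e6, e7, e8, e9]
    have hconc := concave_min (G*q*(1+g*K)) (K*(G*K*N1*x*W - (G-1)*(G-g)*K - (G-g)*q^2))
      (K*(g*q+G*P)) (K*(g*N)) (K*S) huα huβ hEα hEβ
    have hfin2 := le_trans hconc hfin
    exact le_of_mul_le_mul_left hfin2 hK0

/-- Lower-bound half of Theorem 4 of the paper: every feedback profile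
`L = ({m j k}, g, {n i : i < g})` satisfying the necessary IA feasibility
conditions of Theorem 1 has CSI feedback dimension
`D(L) = Σ_{j,k} Σ_{i<g} (n i * A j k - 1) + Σ_{j ≥ g} Σ_k (K*d*A j k - 1)`
at least `D_low = K*G*N₁*g₁*(M - (G - g₁)*K*d) - K*G²`, where
`N₁ = min (G*K*d) N` and `g₁ = ⌊G((G-1)Kd - M + d)/(N₁ - Kd)⌋` (natural-number
division is the integer floor, and the natural subtractions have dominating
minuends under the stated hypotheses). -/
theorem feedback_dimension_lower_bound
    (G K d M N : ℕ) (hG : 2 ≤ G) (hK : 1 ≤ K) (hd : 1 ≤ d)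
    (hN : K * d < N) (hM : M ≤ (G - 1) * (K * d) + d)
    (g : ℕ) (hg : g ≤ G)
    (m : Fin G → Fin K → ℕ) (hmM : ∀ j k, m j k ≤ M)
    (n : Fin G → ℕ) (hnN : ∀ i : Fin G, (i : ℕ) < g → n i ≤ N)
    (A : Fin G → Fin K → ℤ)
    (hA : ∀ (j : Fin G) (k : Fin K), A j k = (m j k : ℤ) -
      (if (j : ℕ) < g then (G : ℤ) - g else (G : ℤ) - g - 1) * (K * d))
    (h1 : ∀ j k, (d : ℤ) ≤ A j k)
    (h2 : ∀ i : Fin G, (i : ℕ) < g → K * d ≤ n i)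
    (h3 : ∀ (Jr : Finset (Fin G × Fin K)) (Jt : Finset (Fin G)),
      (∀ i ∈ Jt, (i : ℕ) < g) →
      (K * d : ℤ) * ∑ p ∈ Jr, ((Jt.erase p.1).card : ℤ) ≤
        ∑ p ∈ Jr, (A p.1 p.2 - d) +
        ∑ i ∈ Jt, (K : ℤ) * ((n i : ℤ) - K * d)) :
    let N₁ : ℕ := min (G * (K * d)) N
    let g₁ : ℕ := G * ((G - 1) * (K * d) + d - M) / (N₁ - K * d)
    (K : ℤ) * G * N₁ * g₁ * ((M : ℤ) - ((G : ℤ) - g₁) * (K * d))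
      - (K : ℤ) * (G : ℤ) ^ 2
    ≤
    (∑ j : Fin G, ∑ k : Fin K,
        ∑ i ∈ Finset.univ.filter (fun i : Fin G => (i : ℕ) < g),
          ((n i : ℤ) * A j k - 1)) +
    ∑ j ∈ Finset.univ.filter (fun j : Fin G => g ≤ (j : ℕ)), ∑ k : Fin K,
        ((K * d : ℤ) * A j k - 1) := by
  classical
  intro N₁ g₁
  -- basic positivity facts
  have hq1 : 1 ≤ K * d := Nat.one_le_iff_ne_zero.mpr (by positivity)
  have hqN₁ : K * d < N₁ := lt_min (by nlinarith) hN
  have hN₁u : N₁ ≤ G * (K * d) := min_le_left _ _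
  have hN₁N : N₁ ≤ N := min_le_right _ _
  -- the index sets
  set ι : Finset (Fin G) := Finset.univ.filter (fun i : Fin G => (i:ℕ) < g) with hι
  set ι' : Finset (Fin G) := Finset.univ.filter (fun j : Fin G => g ≤ (j:ℕ)) with hι'
  have hcard : ι.card = g := by
    have he : ι = Finset.univ.map (Fin.castLEEmb hg) := by
      ext i
      simp only [hι, Finset.mem_filter, Finset.mem_univ, true_and, Finset.mem_map,
        Fin.castLEEmb_apply]
      constructor
      · intro h; exact ⟨⟨(i:ℕ), h⟩, by ext; simp⟩
      · rintro ⟨a, rfl⟩; simpa using a.isLt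
    rw [he, Finset.card_map, Finset.card_univ, Fintype.card_fin]
  have hfilt : Finset.univ.filter (fun i : Fin G => ¬ ((i:ℕ) < g)) = ι' := by
    ext j; simp [hι', not_lt]
  have hcards : ι.card + ι'.card = G := by
    have h := Finset.card_filter_add_card_filter_not
      (s := (Finset.univ : Finset (Fin G))) (p := fun i : Fin G => (i:ℕ) < g)
    rw [hfilt] at h
    simpa using h
  have hcard' : (ι'.card : ℤ) = (G:ℤ) - g := by
    have : ι'.card = G - g := by omega
    rw [this]; push_cast [Nat.cast_sub hg]; ring
  have hsplit : ∀ f : Fin G → ℤ, ∑ j ∈ ι, f j + ∑ j ∈ ι', f j = ∑ j, f j := by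
    intro f
    have h := Finset.sum_filter_add_sum_filter_not Finset.univ (fun i : Fin G => (i:ℕ) < g) f
    rw [hfilt] at h
    exact h
  -- aggregates
  set S : ℤ := ∑ i ∈ ι, (n i : ℤ) with hS
  set TT : ℤ := ∑ j : Fin G, ∑ k : Fin K, A j k with hTT
  set TII : ℤ := ∑ j ∈ ι', ∑ k : Fin K, A j k with hTII
  set TI : ℤ := ∑ j ∈ ι, ∑ k : Fin K, A j k with hTI
  have hTsplit : TI + TII = TT := hsplit _
  -- values of A on each part
  have hAI : ∀ j ∈ ι, ∀ k, A j k = (m j k : ℤ) - ((G:ℤ)-g)*(K*d) := by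
    intro j hj k
    rw [hA j k, if_pos (Finset.mem_filter.mp hj).2]
  have hAII : ∀ j ∈ ι', ∀ k, A j k = (m j k : ℤ) - ((G:ℤ)-g-1)*(K*d) := by
    intro j hj k
    rw [hA j k, if_neg (by simpa [not_lt] using (Finset.mem_filter.mp hj).2)]
  -- rewrite the two goal sums
  have hTerm1 : (∑ j : Fin G, ∑ k : Fin K, ∑ i ∈ ι, ((n i : ℤ) * A j k - 1))
      = S * TT - (G:ℤ)*K*g := by
    have inner : ∀ (j : Fin G) (k : Fin K),
        ∑ i ∈ ι, ((n i : ℤ) * A j k - 1) = S * A j k - g := by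
      intro j k
      rw [Finset.sum_sub_distrib, Finset.sum_const, hcard, ← Finset.sum_mul, ← hS]
      push_cast
      ring
    simp_rw [inner, Finset.sum_sub_distrib, Finset.sum_const, Finset.card_univ,
      Fintype.card_fin, ← Finset.mul_sum, ← hTT]
    push_cast
    ring
  have hTerm2 : (∑ j ∈ ι', ∑ k : Fin K, ((K*d : ℤ) * A j k - 1))
      = (K*d:ℤ) * TII - ((G:ℤ)-g)*K := by
    have inner : ∀ j : Fin G,
        ∑ k : Fin K, ((K*d : ℤ) * A j k - 1) = (K*d:ℤ) * ∑ k : Fin K, A j k - K := by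
      intro j
      rw [Finset.sum_sub_distrib, Finset.sum_const, Finset.card_univ, Fintype.card_fin,
        ← Finset.mul_sum]
      push_cast
      ring
    rw [Finset.sum_congr rfl (fun j _ => inner j), Finset.sum_sub_distrib,
      Finset.sum_const, nsmul_eq_mul, ← Finset.mul_sum, ← hTII, hcard']
  rw [hTerm1, hTerm2]
  -- bounds on S
  have hS1 : (g:ℤ)*(K*d) ≤ S := by
    rw [hS]
    calc (g:ℤ)*((K:ℤ)*d) = ∑ _i ∈ ι, ((K:ℤ)*d) := by
          rw [Finset.sum_const, hcard, nsmul_eq_mul]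
      _ ≤ ∑ i ∈ ι, (n i : ℤ) := Finset.sum_le_sum (fun i hi => by
          have h := h2 i (Finset.mem_filter.mp hi).2
          exact_mod_cast h)
  have hS2 : S ≤ (g:ℤ)*N := by
    rw [hS]
    calc ∑ i ∈ ι, (n i : ℤ) ≤ ∑ _i ∈ ι, (N:ℤ) := Finset.sum_le_sum (fun i hi => by
          have h := hnN i (Finset.mem_filter.mp hi).2
          exact_mod_cast h)
      _ = (g:ℤ)*N := by rw [Finset.sum_const, hcard, nsmul_eq_mul]
  -- bounds on TI, TII
  have hinner_lb : ∀ j : Fin G, (K:ℤ)*d ≤ ∑ k : Fin K, A j k := by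
    intro j
    calc (K:ℤ)*d = ∑ _k : Fin K, (d:ℤ) := by
          rw [Finset.sum_const, Finset.card_univ, Fintype.card_fin, nsmul_eq_mul]
      _ ≤ _ := Finset.sum_le_sum (fun k _ => h1 j k)
  have hTIl : (g:ℤ)*((K:ℤ)*d) ≤ TI := by
    rw [hTI]
    calc (g:ℤ)*((K:ℤ)*d) = ∑ _j ∈ ι, ((K:ℤ)*d) := by
          rw [Finset.sum_const, hcard, nsmul_eq_mul]
      _ ≤ _ := Finset.sum_le_sum (fun j _ => hinner_lb j)
  have hTIIl : ((G:ℤ)-g)*((K:ℤ)*d) ≤ TII := by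
    rw [hTII]
    calc ((G:ℤ)-g)*((K:ℤ)*d) = ∑ _j ∈ ι', ((K:ℤ)*d) := by
          rw [Finset.sum_const, nsmul_eq_mul, hcard']
      _ ≤ _ := Finset.sum_le_sum (fun j _ => hinner_lb j)
  have hTIu : TI ≤ (g:ℤ)*((K:ℤ)*((M:ℤ)-((G:ℤ)-g)*(K*d))) := by
    rw [hTI]
    calc ∑ j ∈ ι, ∑ k : Fin K, A j k
        ≤ ∑ _j ∈ ι, ((K:ℤ)*((M:ℤ)-((G:ℤ)-g)*(K*d))) := by
          refine Finset.sum_le_sum (fun j hj => ?_)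
          calc ∑ k : Fin K, A j k ≤ ∑ _k : Fin K, ((M:ℤ)-((G:ℤ)-g)*(K*d)) := by
                refine Finset.sum_le_sum (fun k _ => ?_)
                rw [hAI j hj k]
                have h : (m j k : ℤ) ≤ M := by exact_mod_cast hmM j k
                linarith
            _ = (K:ℤ)*((M:ℤ)-((G:ℤ)-g)*(K*d)) := by
                rw [Finset.sum_const, Finset.card_univ, Fintype.card_fin, nsmul_eq_mul]
      _ = (g:ℤ)*((K:ℤ)*((M:ℤ)-((G:ℤ)-g)*(K*d))) := by
          rw [Finset.sum_const, hcard, nsmul_eq_mul]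
  have hTIIu : TII ≤ ((G:ℤ)-g)*((K:ℤ)*((M:ℤ)-((G:ℤ)-g-1)*(K*d))) := by
    rw [hTII]
    calc ∑ j ∈ ι', ∑ k : Fin K, A j k
        ≤ ∑ _j ∈ ι', ((K:ℤ)*((M:ℤ)-((G:ℤ)-g-1)*(K*d))) := by
          refine Finset.sum_le_sum (fun j hj => ?_)
          calc ∑ k : Fin K, A j k ≤ ∑ _k : Fin K, ((M:ℤ)-((G:ℤ)-g-1)*(K*d)) := by
                refine Finset.sum_le_sum (fun k _ => ?_)
                rw [hAII j hj k]
                have h : (m j k : ℤ) ≤ M := by exact_mod_cast hmM j k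
                linarith
            _ = (K:ℤ)*((M:ℤ)-((G:ℤ)-g-1)*(K*d)) := by
                rw [Finset.sum_const, Finset.card_univ, Fintype.card_fin, nsmul_eq_mul]
      _ = ((G:ℤ)-g)*((K:ℤ)*((M:ℤ)-((G:ℤ)-g-1)*(K*d))) := by
          rw [Finset.sum_const, nsmul_eq_mul, hcard']
  -- the star inequality from h3
  have h3' := h3 Finset.univ ι (fun i hi => (Finset.mem_filter.mp hi).2)
  have hL : ∑ p ∈ (Finset.univ : Finset (Fin G × Fin K)), ((ι.erase p.1).card : ℤ)
      = (K:ℤ) * ((g:ℤ)*((g:ℤ)-1) + ((G:ℤ)-g)*g) := by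
    rw [Fintype.sum_prod_type]
    have e1 : ∀ j : Fin G, ∑ _k : Fin K, ((ι.erase j).card : ℤ)
        = (K:ℤ) * ((ι.erase j).card : ℤ) := by
      intro j; rw [Finset.sum_const, Finset.card_univ, Fintype.card_fin, nsmul_eq_mul]
    rw [Finset.sum_congr rfl (fun j _ => e1 j), ← Finset.mul_sum]
    congr 1
    rw [← hsplit (fun j => ((ι.erase j).card : ℤ))]
    have e2 : ∀ j ∈ ι, ((ι.erase j).card : ℤ) = (g:ℤ) - 1 := by
      intro j hj
      have hjg := (Finset.mem_filter.mp hj).2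
      rw [Finset.card_erase_of_mem hj, hcard]
      omega
    have e3 : ∀ j ∈ ι', ((ι.erase j).card : ℤ) = (g:ℤ) := by
      intro j hj
      have hnot : j ∉ ι := by
        intro hmem
        have h1' := (Finset.mem_filter.mp hmem).2
        have h2' := (Finset.mem_filter.mp hj).2
        omega
      rw [Finset.erase_eq_of_notMem hnot, hcard]
    rw [Finset.sum_congr rfl e2, Finset.sum_congr rfl e3, Finset.sum_const, Finset.sum_const,
      nsmul_eq_mul, nsmul_eq_mul, hcard, hcard']
  have hR1 : ∑ p ∈ (Finset.univ : Finset (Fin G × Fin K)), (A p.1 p.2 - (d:ℤ))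
      = TT - (G:ℤ)*((K:ℤ)*d) := by
    rw [Fintype.sum_prod_type]
    have e1 : ∀ j : Fin G, ∑ k : Fin K, (A j k - (d:ℤ))
        = (∑ k : Fin K, A j k) - (K:ℤ)*d := by
      intro j
      rw [Finset.sum_sub_distrib, Finset.sum_const, Finset.card_univ, Fintype.card_fin,
        nsmul_eq_mul]
    rw [Finset.sum_congr rfl (fun j _ => e1 j), Finset.sum_sub_distrib, Finset.sum_const,
      Finset.card_univ, Fintype.card_fin, nsmul_eq_mul, ← hTT]
  have hR2 : ∑ i ∈ ι, (K:ℤ)*((n i : ℤ) - (K:ℤ)*d)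
      = (K:ℤ)*S - (g:ℤ)*((K:ℤ)*((K:ℤ)*d)) := by
    rw [← Finset.mul_sum, Finset.sum_sub_distrib, Finset.sum_const, hcard, nsmul_eq_mul, ← hS]
    ring
  rw [hL, hR1, hR2] at h3'
  have hstar : (G:ℤ)*((K:ℤ)*d)*(1+(g:ℤ)*K) ≤ TT + (K:ℤ)*S := by nlinarith [h3']
  -- existence facts
  have hG0 : 0 < G := by omega
  have hK0 : 0 < K := by omega
  have hMI : 1 ≤ (g:ℤ) → ((G:ℤ)-g)*((K:ℤ)*d)+d ≤ (M:ℤ) := by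
    intro hg1
    have hg1' : 1 ≤ g := by exact_mod_cast hg1
    have h := h1 ⟨0, hG0⟩ ⟨0, hK0⟩
    have hAx := hA ⟨0, hG0⟩ ⟨0, hK0⟩
    rw [if_pos (show ((⟨0, hG0⟩ : Fin G):ℕ) < g from hg1')] at hAx
    rw [hAx] at h
    have hm : (m ⟨0, hG0⟩ ⟨0, hK0⟩ : ℤ) ≤ M := by exact_mod_cast hmM _ _
    linarith
  have hMII : (g:ℤ) ≤ (G:ℤ)-1 → ((G:ℤ)-g-1)*((K:ℤ)*d)+d ≤ (M:ℤ) := by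
    intro hgl
    have hgl' : g < G := by
      have h' : (g:ℤ)+1 ≤ G := by linarith
      exact_mod_cast h'
    have h := h1 ⟨g, hgl'⟩ ⟨0, hK0⟩
    have hAx := hA ⟨g, hgl'⟩ ⟨0, hK0⟩
    rw [if_neg (show ¬ ((⟨g, hgl'⟩ : Fin G):ℕ) < g from lt_irrefl g)] at hAx
    rw [hAx] at h
    have hm : (m ⟨g, hgl'⟩ ⟨0, hK0⟩ : ℤ) ≤ M := by exact_mod_cast hmM _ _
    linarith
  -- floor facts
  have hPcast : (((G-1)*(K*d)+d-M : ℕ) : ℤ) = ((G:ℤ)-1)*((K:ℤ)*d)+(d:ℤ)-(M:ℤ) := by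
    have h1' : (1:ℕ) ≤ G := by omega
    push_cast [Nat.cast_sub hM, Nat.cast_sub h1']
    ring
  have hcN : ((N₁ - K*d : ℕ) : ℤ) = (N₁:ℤ) - (K:ℤ)*d := by
    have h' : K*d ≤ N₁ := le_of_lt hqN₁
    push_cast [Nat.cast_sub h']
    ring
  have hxl : (g₁:ℤ)*((N₁:ℤ)-(K:ℤ)*d) ≤ (G:ℤ)*(((G:ℤ)-1)*((K:ℤ)*d)+(d:ℤ)-(M:ℤ)) := by
    have h' : g₁ * (N₁ - K*d) ≤ G*((G-1)*(K*d)+d-M) :=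
      Nat.div_mul_le_self (G*((G-1)*(K*d)+d-M)) (N₁ - K*d)
    calc (g₁:ℤ)*((N₁:ℤ)-(K:ℤ)*d) = ((g₁ * (N₁ - K*d) : ℕ) : ℤ) := by
          rw [Nat.cast_mul, hcN]
      _ ≤ ((G*((G-1)*(K*d)+d-M) : ℕ) : ℤ) := by exact_mod_cast h'
      _ = (G:ℤ)*(((G:ℤ)-1)*((K:ℤ)*d)+(d:ℤ)-(M:ℤ)) := by rw [Nat.cast_mul, hPcast]
  have hP0 : (0:ℤ) ≤ ((G:ℤ)-1)*((K:ℤ)*d)+(d:ℤ)-(M:ℤ) := by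
    have h0 : (0:ℤ) ≤ (((G-1)*(K*d)+d-M : ℕ) : ℤ) := Int.natCast_nonneg _
    rw [hPcast] at h0
    exact h0
  have hN₁d : N₁ = min (G*(K*d)) N := rfl
  have hN1eq : (N₁:ℤ) = (G:ℤ)*((K:ℤ)*d) ∨ (N₁:ℤ) = (N:ℤ) := by
    rcases min_choice (G*(K*d)) N with h | h
    · left
      rw [hN₁d, h]
      push_cast
      ring
    · right
      rw [hN₁d, h]
  -- assemble the core hypotheses
  have hT1c : (G:ℤ)*((K:ℤ)*d) ≤ TT := by
    have e : (g:ℤ)*((K:ℤ)*d) + ((G:ℤ)-g)*((K:ℤ)*d) = (G:ℤ)*((K:ℤ)*d) := by ring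
    linarith only [hTIl, hTIIl, hTsplit, e]
  have hT2c : TT ≤ (g:ℤ)*K*((M:ℤ)-((G:ℤ)-g)*((K:ℤ)*d))
      + ((G:ℤ)-g)*K*((M:ℤ)-((G:ℤ)-g-1)*((K:ℤ)*d)) := by
    have e1 : (g:ℤ)*((K:ℤ)*((M:ℤ)-((G:ℤ)-g)*(K*d)))
        = (g:ℤ)*K*((M:ℤ)-((G:ℤ)-g)*((K:ℤ)*d)) := by ring
    have e2 : ((G:ℤ)-g)*((K:ℤ)*((M:ℤ)-((G:ℤ)-g-1)*(K*d)))
        = ((G:ℤ)-g)*K*((M:ℤ)-((G:ℤ)-g-1)*((K:ℤ)*d)) := by ring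
    linarith only [hTIu, hTIIu, hTsplit, e1, e2]
  have hcore := core (G:ℤ) K d N N₁ M (((G:ℤ)-1)*((K:ℤ)*d)+(d:ℤ)-(M:ℤ)) g₁ g S TT
    (by exact_mod_cast hG) (by exact_mod_cast hK) (by exact_mod_cast hd)
    (by exact_mod_cast hqN₁) (by exact_mod_cast hN₁u) (by exact_mod_cast hN₁N)
    hN1eq rfl hP0 (Int.natCast_nonneg g₁) hxl
    (Int.natCast_nonneg g) (by exact_mod_cast hg) hMI hMII
    hS1 hS2 hT1c hT2c hstar
  -- finish
  have hTIIq : ((K:ℤ)*d)*(((G:ℤ)-g)*((K:ℤ)*d)) ≤ ((K:ℤ)*d)*TII := by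
    have : (0:ℤ) ≤ (K:ℤ)*d := by positivity
    exact mul_le_mul_of_nonneg_left hTIIl this
  linarith only [hcore, hTIIq]
end

section
/- Fix integers K, d ≥ 1 and real numbers C_1, C_2 with 0 < C_1 < d, 0 < C_2 < d and d < C_1 + C_2. For each integer G ≥ 2 define N(G) = ⌊C_1 K G⌋, M(G) = ⌊C_2 K G⌋, N_1(G) = min(G K d, N(G)), g_1(G) = ⌊G((G−1)Kd − M(G) + d)/(N_1(G) − Kd)⌋ (defined for all G large enough that N_1(G) > Kd), and D_low(G) = K·G·N_1(G)·g_1(G)·(M(G) − (G − g_1(G))Kd) − K·G². Then lim_{G→∞} D_low(G)/(G⁴K³) = (d − C_1)(d − C_2)²/C_1. -/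
open Filter Topology

/-!
Every floor changes its argument by less than `1`, so after division by `G` it disappears in the
limit: `N(G)/G → C₁K`, `M(G)/G → C₂K` and `g₁(G)/G → (Kd - C₂K)/(C₁K) = (d - C₂)/C₁`, while
`N₁ = N` because `C₁ < d`. Divided by `G⁴K³`, `D_low` is a polynomial in these three ratios and
`1/G`, and evaluating it at the limits gives `(d - C₁)(d - C₂)²/C₁`.
-/

lemma tendsto_floor_div_natCast {x : ℕ → ℝ} {L : ℝ}
    (h : Tendsto (fun n : ℕ => x n / n) atTop (𝓝 L)) :
    Tendsto (fun n : ℕ => (⌊x n⌋ : ℝ) / n) atTop (𝓝 L) := by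
  have hlow : Tendsto (fun n : ℕ => x n / n - 1 / n) atTop (𝓝 L) := by
    simpa using h.sub tendsto_one_div_atTop_nhds_zero_nat
  refine tendsto_of_tendsto_of_tendsto_of_le_of_le' hlow h ?_ ?_ <;>
    filter_upwards [eventually_gt_atTop 0] with n hn
  · rw [div_sub_div_same]
    gcongr
    linarith [Int.sub_one_lt_floor (x n)]
  · gcongr
    exact Int.floor_le _

lemma tendsto_floor_mul_div_natCast (c : ℝ) :
    Tendsto (fun n : ℕ => (⌊c * n⌋ : ℝ) / n) atTop (𝓝 c) := by
  refine tendsto_floor_div_natCast (tendsto_const_nhds.congr' ?_)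
  filter_upwards [eventually_ne_atTop 0] with n hn
  field_simp

lemma tendsto_affine_div_natCast {x : ℕ → ℝ} {L : ℝ}
    (h : Tendsto (fun n : ℕ => x n / n) atTop (𝓝 L)) (a b c : ℝ) :
    Tendsto (fun n : ℕ => (a * n + b * x n + c) / n) atTop (𝓝 (a + b * L)) := by
  have hlim := ((h.const_mul b).const_add a).add (tendsto_one_div_atTop_nhds_zero_nat.const_mul c)
  rw [mul_zero, add_zero] at hlim
  refine hlim.congr' ?_
  filter_upwards [eventually_ne_atTop 0] with n hn
  field_simp

lemma tendsto_floor_mul_div_div_natCast {A D : ℕ → ℝ} {α β : ℝ} (hβ : β ≠ 0)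
    (hA : Tendsto (fun n : ℕ => A n / n) atTop (𝓝 α))
    (hD : Tendsto (fun n : ℕ => D n / n) atTop (𝓝 β)) :
    Tendsto (fun n : ℕ => (⌊n * A n / D n⌋ : ℝ) / n) atTop (𝓝 (α / β)) := by
  refine tendsto_floor_div_natCast ((hA.div hD hβ).congr fun n => ?_)
  rcases eq_or_ne (n : ℝ) 0 with hn | hn
  · simp [hn]
  · rw [Pi.div_apply, div_div_div_cancel_right₀ hn, mul_div_assoc, mul_div_cancel_left₀ _ hn]

theorem d_low_asymptotics_general
    (K d : ℕ) (hK : 1 ≤ K) (C1 C2 : ℝ)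
    (hC1 : 0 < C1) (hC1d : C1 < d) :
    Tendsto (fun G : ℕ =>
      let Nf : ℤ := ⌊C1 * (K : ℝ) * G⌋
      let Mf : ℤ := ⌊C2 * (K : ℝ) * G⌋
      let N1 : ℤ := min ((G : ℤ) * (K * d)) Nf
      let g1 : ℤ :=
        ⌊((G : ℝ) * (((G : ℝ) - 1) * ((K : ℝ) * d) - (Mf : ℝ) + d)) /
          ((N1 : ℝ) - (K : ℝ) * d)⌋
      let Dlow : ℤ :=
        (K : ℤ) * G * N1 * g1 * (Mf - ((G : ℤ) - g1) * (K * d)) -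
          (K : ℤ) * (G : ℤ) ^ 2
      (Dlow : ℝ) / ((G : ℝ) ^ 4 * (K : ℝ) ^ 3))
      atTop (nhds ((d - C1) * (d - C2) ^ 2 / C1)) := by
  have hK0 : (K : ℝ) ≠ 0 := by positivity
  have hN := tendsto_floor_mul_div_natCast (C1 * K)
  have hM := tendsto_floor_mul_div_natCast (C2 * K)
  have hg := tendsto_floor_mul_div_div_natCast (by positivity)
    (A := fun G => (G - 1) * (K * d) - ⌊C2 * (K : ℝ) * G⌋ + d)
    (D := fun G => ⌊C1 * (K : ℝ) * G⌋ - K * d)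
    ((tendsto_affine_div_natCast hM (K * d) (-1) (d - K * d)).congr fun G => by ring)
    ((tendsto_affine_div_natCast hN 0 1 (-(K * d))).congr fun G => by ring)
  have hinv := tendsto_one_div_atTop_nhds_zero_nat (𝕜 := ℝ)
  have hlim := ((hN.mul hg).mul
      (hM.sub (((tendsto_const_nhds (x := (1 : ℝ))).sub hg).mul_const ((K : ℝ) * d)))
    |>.sub (hinv.mul hinv)).div_const ((K : ℝ) ^ 2)
  convert hlim.congr' ?_ using 2
  · field_simp
    ring
  filter_upwards [eventually_ne_atTop 0] with G hG
  have hN1 : min ((G : ℤ) * (K * d)) ⌊C1 * (K : ℝ) * G⌋ = ⌊C1 * (K : ℝ) * G⌋ := by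
    refine min_eq_right (Int.floor_le_iff.2 ((lt_add_one _).trans_le' ?_))
    push_cast
    nlinarith [mul_nonneg (Nat.cast_nonneg (α := ℝ) K) (Nat.cast_nonneg (α := ℝ) G)]
  simp only [hN1]
  push_cast
  field_simp

/-- Core asymptotic computation in Corollary 2 of the paper: the lower bound
`D_low(G) = K·G·N₁(G)·g₁(G)·(M(G) - (G - g₁(G))Kd) - K·G²` on the minimum CSI
feedback dimension, with `N(G) = ⌊C₁KG⌋`, `M(G) = ⌊C₂KG⌋`,
`N₁(G) = min (GKd) (N(G))` and
`g₁(G) = ⌊G((G-1)Kd - M(G) + d)/(N₁(G) - Kd)⌋`, satisfies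
`D_low(G)/(G⁴K³) → (d - C₁)(d - C₂)²/C₁` as `G → ∞`. -/
theorem d_low_asymptotics
    (K d : ℕ) (hK : 1 ≤ K) (hd : 1 ≤ d) (C1 C2 : ℝ)
    (hC1 : 0 < C1) (hC1d : C1 < d) (hC2 : 0 < C2) (hC2d : C2 < d)
    (hsum : (d : ℝ) < C1 + C2) :
    Tendsto (fun G : ℕ =>
      let Nf : ℤ := ⌊C1 * (K : ℝ) * G⌋
      let Mf : ℤ := ⌊C2 * (K : ℝ) * G⌋
      let N1 : ℤ := min ((G : ℤ) * (K * d)) Nf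
      let g1 : ℤ :=
        ⌊((G : ℝ) * (((G : ℝ) - 1) * ((K : ℝ) * d) - (Mf : ℝ) + d)) /
          ((N1 : ℝ) - (K : ℝ) * d)⌋
      let Dlow : ℤ :=
        (K : ℤ) * G * N1 * g1 * (Mf - ((G : ℤ) - g1) * (K * d)) -
          (K : ℤ) * (G : ℤ) ^ 2
      (Dlow : ℝ) / ((G : ℝ) ^ 4 * (K : ℝ) ^ 3))
      atTop (nhds ((d - C1) * (d - C2) ^ 2 / C1)) :=
  d_low_asymptotics_general K d hK C1 C2 hC1 hC1d
end

section
/- Let d ≥ 1 and let S, Φ ∈ ℂ^{d×d} be Hermitian positive semidefinite matrices. Then I + Φ is invertible and det(I + S·(I + Φ)^{-1}) ≥ det(I + S)/(1 + tr(Φ)/d)^d, where all three quantities are positive real numbers. -/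
/-!
Since `1 + Φ` is invertible, `det (1 + S (1 + Φ)⁻¹) = det (1 + Φ + S) / det (1 + Φ)`.
The numerator is at least `det (1 + S)`: by the matrix determinant lemma,
`det (A + Cᴴ C) = det A · det (1 + C A⁻¹ Cᴴ)`, and the last factor is a product of numbers
`1 + μᵢ ≥ 1`. The denominator is `∏ (1 + λᵢ)` over the eigenvalues of `Φ`, which is at most
`(1 + tr Φ / d) ^ d` by AM–GM.
-/

open Matrix ComplexOrder Finset

theorem Real.prod_le_arith_mean_pow {ι : Type*} (s : Finset ι) (z : ι → ℝ)
    (hz : ∀ i ∈ s, 0 ≤ z i) : ∏ i ∈ s, z i ≤ ((∑ i ∈ s, z i) / #s) ^ #s := by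
  rcases s.eq_empty_or_nonempty with rfl | hs
  · simp
  have hcard : (#s : ℝ) ≠ 0 := by positivity
  have hw : ∑ _i ∈ s, (#s : ℝ)⁻¹ = 1 := by simp [hcard]
  have amgm := Real.geom_mean_le_arith_mean_weighted s (fun _ => (#s : ℝ)⁻¹) z
    (fun _ _ => by positivity) hw hz
  calc ∏ i ∈ s, z i = (∏ i ∈ s, z i ^ (#s : ℝ)⁻¹) ^ #s := by
        rw [← prod_pow]
        exact prod_congr rfl fun i hi =>
          (Real.rpow_inv_natCast_pow (hz i hi) (by simpa using hcard)).symm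
    _ ≤ (∑ i ∈ s, (#s : ℝ)⁻¹ * z i) ^ #s :=
        pow_le_pow_left₀ (prod_nonneg fun i hi => Real.rpow_nonneg (hz i hi) _) amgm _
    _ = ((∑ i ∈ s, z i) / #s) ^ #s := by rw [← mul_sum, inv_mul_eq_div]

theorem Real.prod_one_add_le_one_add_arith_mean_pow {ι : Type*} (s : Finset ι) (z : ι → ℝ)
    (hz : ∀ i ∈ s, 0 ≤ z i) : ∏ i ∈ s, (1 + z i) ≤ (1 + (∑ i ∈ s, z i) / #s) ^ #s := by
  rcases s.eq_empty_or_nonempty with rfl | hs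
  · simp
  have hcard : (#s : ℝ) ≠ 0 := by positivity
  convert Real.prod_le_arith_mean_pow s (fun i => 1 + z i)
    (fun i hi => by linarith [hz i hi]) using 2
  rw [sum_add_distrib, sum_const, nsmul_one, add_div, div_self hcard]

namespace Matrix
variable {𝕜 n : Type*} [RCLike 𝕜] [Fintype n] [DecidableEq n] {A B : Matrix n n 𝕜}

theorem IsHermitian.det_cfc (hA : A.IsHermitian) (f : ℝ → ℝ) :
    det (cfc f A) = ∏ i, (f (hA.eigenvalues i) : 𝕜) := by
  rw [hA.cfc_eq]
  simp [IsHermitian.cfc, -Unitary.conjStarAlgAut_apply]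

theorem IsHermitian.det_one_add (hA : A.IsHermitian) :
    det (1 + A) = ∏ i, ((1 + hA.eigenvalues i : ℝ) : 𝕜) := by
  rw [← hA.det_cfc, cfc_const_add 1 (fun x => x) A, cfc_id' ℝ A, map_one]

theorem PosSemidef.one_le_det_one_add (hA : A.PosSemidef) : 1 ≤ det (1 + A) := by
  rw [hA.isHermitian.det_one_add, ← RCLike.ofReal_prod, ← RCLike.ofReal_one,
    RCLike.ofReal_le_ofReal]
  exact one_le_prod fun i _ => le_add_of_nonneg_right (hA.eigenvalues_nonneg i)

open scoped MatrixOrder in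
theorem PosDef.det_le_det_add (hA : A.PosDef) (hB : B.PosSemidef) : det A ≤ det (A + B) := by
  obtain ⟨C, rfl⟩ := CStarAlgebra.nonneg_iff_eq_star_mul_self.mp hB.nonneg
  have hM : (C * A⁻¹ * Cᴴ).PosSemidef := hA.inv.posSemidef.mul_mul_conjTranspose_same C
  rw [det_add_mul _ _ (isUnit_iff_ne_zero.mpr hA.det_pos.ne'), star_eq_conjTranspose]
  simpa only [mul_one] using mul_le_mul_of_nonneg_left hM.one_le_det_one_add hA.det_pos.le

theorem PosSemidef.det_one_add_le (hA : A.PosSemidef) :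
    det (1 + A) ≤ (((1 + RCLike.re (trace A) / Fintype.card n) ^ Fintype.card n : ℝ) : 𝕜) := by
  rw [hA.isHermitian.det_one_add, ← RCLike.ofReal_prod, RCLike.ofReal_le_ofReal,
    hA.isHermitian.trace_eq_sum_eigenvalues, ← RCLike.ofReal_sum, RCLike.ofReal_re]
  exact Real.prod_one_add_le_one_add_arith_mean_pow _ _ fun i _ => hA.eigenvalues_nonneg i

theorem det_one_add_mul_inv {R : Type*} [Field R] {P S : Matrix n n R} (hP : IsUnit P) :
    det (1 + S * P⁻¹) = det (P + S) / det P := by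
  have hdet := (isUnit_iff_isUnit_det P).mp hP
  rw [eq_div_iff hdet.ne_zero, ← det_mul, add_mul, one_mul,
    nonsing_inv_mul_cancel_right _ _ hdet, add_comm]

end Matrix

theorem rate_loss_trace_bound_general
    (d : ℕ) (S Φ : Matrix (Fin d) (Fin d) ℂ)
    (hS : S.PosSemidef) (hΦ : Φ.PosSemidef) :
    IsUnit (1 + Φ) ∧
    (0 < (1 + S).det.re ∧ (1 + S).det.im = 0) ∧
    (0 < (1 + S * (1 + Φ)⁻¹).det.re ∧ (1 + S * (1 + Φ)⁻¹).det.im = 0) ∧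
    (1 + S).det.re / (1 + Φ.trace.re / d) ^ d ≤ (1 + S * (1 + Φ)⁻¹).det.re := by
  have hS₁ : (1 + S).PosDef := PosDef.one.add_posSemidef hS
  have hΦ₁ : (1 + Φ).PosDef := PosDef.one.add_posSemidef hΦ
  have hnum : (1 + S).det ≤ (1 + Φ + S).det := by
    simpa only [add_right_comm] using hS₁.det_le_det_add hΦ
  have hden : (1 + Φ).det ≤ (((1 + Φ.trace.re / d) ^ d : ℝ) : ℂ) := by
    simpa using hΦ.det_one_add_le
  rw [det_one_add_mul_inv hΦ₁.isUnit]
  have hq : 0 < (1 + Φ + S).det / (1 + Φ).det :=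
    div_pos (hS₁.det_pos.trans_le hnum) hΦ₁.det_pos
  obtain ⟨ha, ha'⟩ := Complex.pos_iff.1 hS₁.det_pos
  obtain ⟨hq, hq'⟩ := Complex.pos_iff.1 hq
  obtain ⟨hc, hc'⟩ := Complex.pos_iff.1 hΦ₁.det_pos
  refine ⟨hΦ₁.isUnit, ⟨ha, ha'.symm⟩, ⟨hq, hq'.symm⟩, ?_⟩
  have hc_real : (1 + Φ).det = ((1 + Φ).det.re : ℂ) := Complex.ext rfl (by simp [← hc'])
  rw [hc_real, Complex.div_ofReal_re]
  calc (1 + S).det.re / (1 + Φ.trace.re / d) ^ d ≤ (1 + S).det.re / (1 + Φ).det.re :=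
        div_le_div_of_nonneg_left ha.le hc (Complex.le_def.1 hden).1
    _ ≤ (1 + Φ + S).det.re / (1 + Φ).det.re :=
        div_le_div_of_nonneg_right (Complex.le_def.1 hnum).1 hc.le

/-- Combined deterministic core of Lemma 6 of the paper: for Hermitian positive
semidefinite `S, Φ ∈ ℂ^{d×d}`, the matrix `I + Φ` is invertible and
`det (I + S (I + Φ)⁻¹) ≥ det (I + S) / (1 + tr Φ / d) ^ d`, all quantities
being positive reals. -/
theorem rate_loss_trace_bound
    (d : ℕ) (hd : 1 ≤ d) (S Φ : Matrix (Fin d) (Fin d) ℂ)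
    (hS : S.PosSemidef) (hΦ : Φ.PosSemidef) :
    IsUnit (1 + Φ) ∧
    (0 < (1 + S).det.re ∧ (1 + S).det.im = 0) ∧
    (0 < (1 + S * (1 + Φ)⁻¹).det.re ∧ (1 + S * (1 + Φ)⁻¹).det.im = 0) ∧
    (1 + S).det.re / (1 + Φ.trace.re / d) ^ d ≤ (1 + S * (1 + Φ)⁻¹).det.re :=
  rate_loss_trace_bound_general d S Φ hS hΦ
end

section
/- Let c > 0 and C ≥ 0 be real constants and let μ be a probability measure on ℝ with μ((−∞, 0]) = 0 and ∫ log(1 + v) dμ(v) < ∞. Suppose R : ℝ → ℝ satisfies c·∫ log(1 + P·v) dμ(v) − C ≤ R(P) ≤ c·∫ log(1 + P·v) dμ(v) for all P ≥ 1. Then lim_{P→∞} R(P)/log P = c. -/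
/-!
Writing `1 + P v = P (P⁻¹ + v)`, the ratio `log (1 + P v) / log P` tends to `1` for every `v > 0`,
and it is dominated by `1 + log (1 + v)` as soon as `log P ≥ 1`. Dominated convergence gives
`∫ log (1 + P v) dμ / log P → 1`, and the bounded gap `C` vanishes after division by `log P`.
-/

open Filter MeasureTheory Topology

theorem tendsto_log_one_add_mul_div_log {v : ℝ} (hv : 0 < v) :
    Tendsto (fun P => Real.log (1 + P * v) / Real.log P) atTop (𝓝 1) := by
  have hshift : Tendsto (fun P : ℝ => Real.log (P⁻¹ + v)) atTop (𝓝 (Real.log v)) := by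
    simpa using (tendsto_inv_atTop_zero.add_const v).log (by simpa using hv.ne')
  have hsmall : Tendsto (fun P => Real.log (P⁻¹ + v) / Real.log P) atTop (𝓝 0) := by
    simpa [div_eq_mul_inv] using hshift.mul Real.tendsto_log_atTop.inv_tendsto_atTop
  have hsplit : ∀ᶠ P in atTop,
      1 + Real.log (P⁻¹ + v) / Real.log P = Real.log (1 + P * v) / Real.log P := by
    filter_upwards [eventually_gt_atTop 1] with P hP
    have hP0 : 0 < P := one_pos.trans hP
    rw [show 1 + P * v = P * (P⁻¹ + v) by field_simp,
      Real.log_mul hP0.ne' (by positivity), add_div, div_self (Real.log_pos hP).ne']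
  simpa using (hsmall.const_add 1).congr' hsplit

theorem log_one_add_mul_le_log_add_log_one_add {P v : ℝ} (hP : 1 ≤ P) (hv : 0 ≤ v) :
    Real.log (1 + P * v) ≤ Real.log P + Real.log (1 + v) := by
  rw [← Real.log_mul (by positivity) (by positivity)]
  exact Real.log_le_log (by positivity) (by nlinarith)

theorem tendsto_integral_log_one_add_mul_div_log {μ : Measure ℝ} [IsFiniteMeasure μ]
    (hpos : ∀ᵐ v ∂μ, 0 < v) (hint : Integrable (fun v => Real.log (1 + v)) μ) :
    Tendsto (fun P => (∫ v, Real.log (1 + P * v) ∂μ) / Real.log P) atTop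
      (𝓝 (μ.real Set.univ)) := by
  have hbound : ∀ᶠ P in atTop, ∀ᵐ v ∂μ,
      ‖Real.log (1 + P * v) / Real.log P‖ ≤ 1 + Real.log (1 + v) := by
    filter_upwards [eventually_ge_atTop (Real.exp 1)] with P hP
    filter_upwards [hpos] with v hv
    have hP1 : 1 ≤ P := (Real.one_le_exp zero_le_one).trans hP
    have hlogP : 1 ≤ Real.log P := (Real.le_log_iff_exp_le (by positivity)).2 hP
    have hlog1v : 0 ≤ Real.log (1 + v) := Real.log_nonneg (by linarith)
    rw [Real.norm_of_nonneg (div_nonneg (Real.log_nonneg (by nlinarith)) (by linarith)),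
      div_le_iff₀ (by linarith)]
    nlinarith [log_one_add_mul_le_log_add_log_one_add hP1 hv.le]
  have hdct := tendsto_integral_filter_of_dominated_convergence (μ := μ)
    (fun v => 1 + Real.log (1 + v))
    (Eventually.of_forall fun P => Measurable.aestronglyMeasurable (by fun_prop)) hbound
    ((integrable_const 1).add hint)
    (hpos.mono fun v hv => tendsto_log_one_add_mul_div_log hv)
  simpa [integral_div] using hdct

theorem tendsto_div_of_mul_sub_const_le_of_le_mul {α : Type*} {F : Filter α}
    {l f R : α → ℝ} {a c C : ℝ} (hl : Tendsto l F atTop)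
    (hf : Tendsto (fun x => f x / l x) F (𝓝 a))
    (hlower : ∀ᶠ x in F, c * f x - C ≤ R x) (hupper : ∀ᶠ x in F, R x ≤ c * f x) :
    Tendsto (fun x => R x / l x) F (𝓝 (c * a)) := by
  have hupper_lim : Tendsto (fun x => c * (f x / l x)) F (𝓝 (c * a)) := hf.const_mul c
  have hlower_lim : Tendsto (fun x => c * (f x / l x) - C * (l x)⁻¹) F (𝓝 (c * a)) := by
    simpa using hupper_lim.sub (hl.inv_tendsto_atTop.const_mul C)
  have hl_pos : ∀ᶠ x in F, 0 < l x := hl.eventually_gt_atTop 0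
  refine tendsto_of_tendsto_of_tendsto_of_le_of_le' hlower_lim hupper_lim ?_ ?_
  · filter_upwards [hlower, hl_pos] with x hx hlx
    calc c * (f x / l x) - C * (l x)⁻¹ = (c * f x - C) / l x := by ring
      _ ≤ R x / l x := div_le_div_of_nonneg_right hx hlx.le
  · filter_upwards [hupper, hl_pos] with x hx hlx
    calc R x / l x ≤ c * f x / l x := div_le_div_of_nonneg_right hx hlx.le
      _ = c * (f x / l x) := by ring

theorem sandwiched_throughput_dof_general
    (c C : ℝ)
    (μ : Measure ℝ) [IsProbabilityMeasure μ]
    (h0 : μ (Set.Iic 0) = 0)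
    (hint : Integrable (fun v => Real.log (1 + v)) μ)
    (R : ℝ → ℝ)
    (hR : ∀ P : ℝ, 1 ≤ P →
      c * (∫ v, Real.log (1 + P * v) ∂μ) - C ≤ R P ∧
      R P ≤ c * (∫ v, Real.log (1 + P * v) ∂μ)) :
    Tendsto (fun P : ℝ => R P / Real.log P) atTop (nhds c) := by
  have hpos : ∀ᵐ v ∂μ, 0 < v := ae_iff.2 (by simp only [not_lt]; exact h0)
  have hI := tendsto_integral_log_one_add_mul_div_log hpos hint
  rw [probReal_univ] at hI
  have hsandwich := (eventually_ge_atTop (1 : ℝ)).mono fun P hP => hR P hP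
  simpa using tendsto_div_of_mul_sub_const_le_of_le_mul Real.tendsto_log_atTop hI
    (hsandwich.mono fun _ h => h.1) (hsandwich.mono fun _ h => h.2)

/-- Abstract form of Theorem 5 of the paper (scaling law between CSI feedback
bits and feedback dimension): if a throughput `R` is sandwiched between
`c ∫ log (1 + P v) dμ(v) - C` and `c ∫ log (1 + P v) dμ(v)` for all SNR
`P ≥ 1`, where `μ` is a probability measure supported on the positive reals
with `∫ log (1 + v) dμ(v) < ∞`, then `R(P)/log P → c`, i.e. the network
retains its full sum degrees of freedom `c = GKd`. -/
theorem sandwiched_throughput_dof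
    (c C : ℝ) (hc : 0 < c) (hC : 0 ≤ C)
    (μ : Measure ℝ) [IsProbabilityMeasure μ]
    (h0 : μ (Set.Iic 0) = 0)
    (hint : Integrable (fun v => Real.log (1 + v)) μ)
    (R : ℝ → ℝ)
    (hR : ∀ P : ℝ, 1 ≤ P →
      c * (∫ v, Real.log (1 + P * v) ∂μ) - C ≤ R P ∧
      R P ≤ c * (∫ v, Real.log (1 + P * v) ∂μ)) :
    Tendsto (fun P : ℝ => R P / Real.log P) atTop (nhds c) :=
  sandwiched_throughput_dof_general c C μ h0 hint R hR
end
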